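/- arXiv:1605.07299 — 10 statements merged into one kernel-verified Lean document; each statement's English description precedes it below -/
import Mathlib

section
/- Let μ be a finite positive Borel measure on ℂ with compact support. If the sequence of monomials (e_k)_{k∈ℕ} is a Bessel sequence in L²(μ), then μ({z ∈ ℂ : |z| > 1}) = 0. -/
open MeasureTheory

/-- The monomials `(z^k)_{k∈ℕ}` form a Bessel sequence in `L²(μ)` with bound `C`:
`∑_k |⟨g, e_k⟩_{L²(μ)}|² ≤ C‖g‖²_{L²(μ)}` for every `g ∈ L²(μ)`
(stated via finite partial sums). -/
def MonomialsBesselWith (μ : Measure ℂ) (C : ℝ) : Prop :=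
  ∀ g : ℂ → ℂ, MemLp g 2 μ → ∀ F : Finset ℕ,
    ∑ k ∈ F, ‖∫ z, g z * (starRingEnd ℂ) (z ^ k) ∂μ‖ ^ 2 ≤ C * ∫ z, ‖g z‖ ^ 2 ∂μ

/-! If `μ` charged `{1 < ‖z‖}`, it would charge a compact annulus `A = {r ≤ ‖z‖ ≤ s}` with
`r > 1`. Testing the Bessel inequality against `g = 1_A z^n` gives `⟨g, e_n⟩ = ‖g‖² = ∫_A ‖z‖^(2n) dμ`,
so this integral is at most `C` for every `n`; but it is at least `r^(2n) μ(A) → ∞`. -/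

open Set ComplexConjugate

theorem exists_measure_preimage_Icc_ne_zero {α : Type*} [MeasurableSpace α] {μ : Measure α}
    {f : α → ℝ} {a : ℝ} (h : μ {x | a < f x} ≠ 0) :
    ∃ r s, a < r ∧ μ (f ⁻¹' Icc r s) ≠ 0 := by
  contrapose! h
  have hcover : {x | a < f x} ⊆ ⋃ (m : ℕ) (k : ℕ), f ⁻¹' Icc (a + 1 / (m + 1)) k := by
    intro x hx
    obtain ⟨m, hm⟩ := exists_nat_one_div_lt (sub_pos.mpr (show a < f x from hx))
    obtain ⟨k, hk⟩ := exists_nat_ge (f x)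
    exact mem_iUnion₂.mpr ⟨m, k, by linarith, hk⟩
  refine measure_mono_null hcover (measure_iUnion_null fun m ↦ measure_iUnion_null fun k ↦ ?_)
  exact h _ _ (lt_add_of_pos_right a Nat.one_div_pos_of_nat)

theorem MonomialsBesselWith.setIntegral_norm_pow_le {μ : Measure ℂ} [IsFiniteMeasure μ] {C : ℝ}
    (hB : MonomialsBesselWith μ C) (hC : 0 ≤ C) {A : Set ℂ} (hA : IsCompact A) (n : ℕ) :
    ∫ z in A, ‖z‖ ^ (2 * n) ∂μ ≤ C := by
  obtain ⟨s, hs⟩ := hA.isBounded.exists_norm_le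
  set g : ℂ → ℂ := A.indicator (· ^ n)
  have hg_bound : ∀ z, ‖g z‖ ≤ |s| ^ n := by
    intro z
    by_cases hz : z ∈ A
    · simpa [g, hz] using pow_le_pow_left₀ (norm_nonneg z) ((hs z hz).trans (le_abs_self s)) n
    · simp [g, hz]
  have hg : MemLp g 2 μ :=
    .of_bound ((measurable_id.pow_const n).indicator hA.measurableSet).aestronglyMeasurable
      _ (ae_of_all _ hg_bound)
  have hinner : ∀ z, g z * conj (z ^ n) = A.indicator (fun z ↦ ((‖z‖ ^ (2 * n) : ℝ) : ℂ)) z := by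
    intro z
    by_cases hz : z ∈ A
    · simp only [g, indicator_of_mem hz, map_pow, ← mul_pow, Complex.mul_conj']
      push_cast
      ring
    · simp [g, hz]
  have hnorm : ∀ z, ‖g z‖ ^ 2 = A.indicator (fun z ↦ ‖z‖ ^ (2 * n)) z := by
    intro z
    by_cases hz : z ∈ A
    · simp [g, hz, pow_mul']
    · simp [g, hz]
  have hbessel := hB g hg {n}
  simp only [Finset.sum_singleton, hinner, hnorm, integral_indicator hA.measurableSet,
    integral_complex_ofReal, Complex.norm_real, Real.norm_eq_abs, sq_abs] at hbessel
  have hI : 0 ≤ ∫ z in A, ‖z‖ ^ (2 * n) ∂μ :=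
    setIntegral_nonneg hA.measurableSet fun _ _ ↦ by positivity
  nlinarith

theorem stmt_1_general (μ : Measure ℂ) [IsFiniteMeasure μ]
    (hB : ∃ C > 0, MonomialsBesselWith μ C) :
    μ {z : ℂ | 1 < ‖z‖} = 0 := by
  obtain ⟨C, hC, hBC⟩ := hB
  by_contra hμ
  obtain ⟨r, s, hr, hA⟩ := exists_measure_preimage_Icc_ne_zero hμ
  set A := (‖·‖ : ℂ → ℝ) ⁻¹' Icc r s
  have hAc : IsCompact A := Metric.isCompact_of_isClosed_isBounded
    (isClosed_Icc.preimage continuous_norm) (isBounded_iff_forall_norm_le.2 ⟨s, fun _ hz ↦ hz.2⟩)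
  have hμA : 0 < μ.real A := ENNReal.toReal_pos hA (measure_ne_top μ A)
  obtain ⟨n, hn⟩ := pow_unbounded_of_one_lt (C / μ.real A) (one_lt_pow₀ hr two_ne_zero)
  have hlow : r ^ (2 * n) * μ.real A ≤ ∫ z in A, ‖z‖ ^ (2 * n) ∂μ :=
    setIntegral_ge_of_const_le_real hAc.measurableSet (measure_ne_top μ A)
      (fun z hz ↦ pow_le_pow_left₀ (by linarith) hz.1 _)
      ((continuous_norm.pow _).continuousOn.integrableOn_compact hAc)
  have hup := hBC.setIntegral_norm_pow_le hC.le hAc n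
  rw [← pow_mul, div_lt_iff₀ hμA] at hn
  linarith

theorem stmt_1 (μ : Measure ℂ) [IsFiniteMeasure μ]
    (hsupp : ∃ R : ℝ, μ {z : ℂ | R < ‖z‖} = 0)
    (hB : ∃ C > 0, MonomialsBesselWith μ C) :
    μ {z : ℂ | 1 < ‖z‖} = 0 :=
  stmt_1_general μ hB
end

section
/- Let A be a unitary operator on a complex Hilbert space H, let x ∈ H, and let C > 0. Then the sequence (A^k x)_{k∈ℕ} is a Bessel sequence in H with bound C if and only if the two-sided family (A^k x)_{k∈ℤ} (where A^k for negative k means (A⁻¹)^{−k}) is a Bessel sequence in H with bound C. -/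
open MeasureTheory ContinuousLinearMap

/-- `y` is a Bessel sequence with Bessel bound `C`:
`∑_j |⟨v, y_j⟩|² ≤ C‖v‖²` for all `v` (stated via finite partial sums). -/
def IsBesselSequenceWith {H : Type*} [NormedAddCommGroup H] [InnerProductSpace ℂ H]
    {ι : Type*} (y : ι → H) (C : ℝ) : Prop :=
  ∀ v : H, ∀ F : Finset ι, ∑ j ∈ F, ‖(inner ℂ v (y j) : ℂ)‖ ^ 2 ≤ C * ‖v‖ ^ 2

/-!
The negative part of the two-sided orbit is pulled back into the one-sided orbit by
an isometry: since `A† A = 1`, the vector `A^k x` (`k ∈ ℤ`) equals `(A†)^N A^(k+N) x` for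
every `N ≥ 0`, hence `⟨v, A^k x⟩ = ⟨A^N v, A^(k+N) x⟩` with `‖A^N v‖ = ‖v‖`. Any finite set
of indices in `ℤ` is moved into `ℕ` by a large enough shift `N`, so the Bessel bound of the
one-sided orbit applies with the same constant. The converse is restriction to `ℕ ⊆ ℤ`.
-/

section Bessel

variable {H : Type*} [NormedAddCommGroup H] [InnerProductSpace ℂ H] {ι κ : Type*}
  {y : ι → H} {C : ℝ}

theorem IsBesselSequenceWith.comp_injective (hy : IsBesselSequenceWith y C) {g : κ → ι}
    (hg : Function.Injective g) : IsBesselSequenceWith (y ∘ g) C := by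
  intro v F
  simpa only [Finset.sum_map, Function.Embedding.coeFn_mk, Function.comp_apply] using
    hy v (F.map ⟨g, hg⟩)

theorem isBesselSequenceWith_of_forall_finset_subset_range
    (h : ∀ F : Finset ι, ∃ g : κ → ι, Function.Injective g ∧ ↑F ⊆ Set.range g ∧
      IsBesselSequenceWith (y ∘ g) C) :
    IsBesselSequenceWith y C := by
  intro v F
  obtain ⟨g, hg, hFg, hyg⟩ := h F
  rw [← Finset.sum_preimage g F hg.injOn _ fun j hj hjg ↦ (hjg (hFg hj)).elim]
  exact hyg v _

theorem IsBesselSequenceWith.adjoint_comp [CompleteSpace H] (hy : IsBesselSequenceWith y C)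
    {U : H →L[ℂ] H} (hU : ∀ v, ‖U v‖ = ‖v‖) :
    IsBesselSequenceWith (fun j ↦ adjoint U (y j)) C := by
  intro v F
  simpa only [adjoint_inner_right, hU] using hy (U v) F

end Bessel

section Orbit

variable {H : Type*} [NormedAddCommGroup H] [InnerProductSpace ℂ H] [CompleteSpace H]
  {A : H →L[ℂ] H}

noncomputable def twoSidedOrbit (A : H →L[ℂ] H) (x : H) (k : ℤ) : H :=
  if 0 ≤ k then (A ^ k.toNat) x else (adjoint A ^ (-k).toNat) x

theorem twoSidedOrbit_natCast (A : H →L[ℂ] H) (x : H) (n : ℕ) :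
    twoSidedOrbit A x n = (A ^ n) x := by
  simp [twoSidedOrbit]

theorem twoSidedOrbit_eq_adjoint_apply_succ (hA : adjoint A ∘L A = 1) (x : H) (k : ℤ) :
    twoSidedOrbit A x k = adjoint A (twoSidedOrbit A x (k + 1)) := by
  unfold twoSidedOrbit
  by_cases hk : 0 ≤ k
  · rw [if_pos hk, if_pos (by omega), show (k + 1).toNat = k.toNat + 1 by omega, pow_succ',
      mul_apply_eq_comp, ← comp_apply, hA, one_apply_eq_self]
  · rw [if_neg hk, show (-k).toNat = (-(k + 1)).toNat + 1 by omega, pow_succ', mul_apply_eq_comp]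
    split_ifs
    · rw [show (k + 1).toNat = 0 by omega, show (-(k + 1)).toNat = 0 by omega]
      rfl
    · rfl

theorem twoSidedOrbit_eq_adjoint_pow_apply_add (hA : adjoint A ∘L A = 1) (x : H) (k : ℤ)
    (N : ℕ) : twoSidedOrbit A x k = (adjoint A ^ N) (twoSidedOrbit A x (k + N)) := by
  induction N with
  | zero => simp
  | succ N ih =>
    rw [ih, twoSidedOrbit_eq_adjoint_apply_succ hA x (k + N), pow_succ, mul_apply_eq_comp]
    push_cast
    rw [add_assoc]

theorem norm_pow_apply_of_adjoint_comp_self (hA : adjoint A ∘L A = 1) (N : ℕ) (v : H) :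
    ‖(A ^ N) v‖ = ‖v‖ := by
  induction N with
  | zero => simp
  | succ N ih => rw [pow_succ', mul_apply_eq_comp, (norm_map_iff_adjoint_comp_self A).mpr hA, ih]

theorem isBesselSequenceWith_twoSidedOrbit (hA : adjoint A ∘L A = 1) {x : H} {C : ℝ}
    (h : IsBesselSequenceWith (fun n : ℕ ↦ (A ^ n) x) C) :
    IsBesselSequenceWith (twoSidedOrbit A x) C := by
  refine isBesselSequenceWith_of_forall_finset_subset_range (κ := ℕ) fun F ↦ ?_
  set N : ℕ := F.sup fun k ↦ (-k).toNat
  refine ⟨fun n : ℕ ↦ (n : ℤ) - N, fun m n hmn ↦ by simpa using hmn, fun k hk ↦ ?_, ?_⟩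
  · have : (-k).toNat ≤ N := Finset.le_sup (f := fun k ↦ (-k).toNat) hk
    exact ⟨(k + N).toNat, by simp only; omega⟩
  · have hshift : twoSidedOrbit A x ∘ (fun n : ℕ ↦ (n : ℤ) - N) =
        fun n ↦ adjoint (A ^ N) ((A ^ n) x) := by
      ext1 n
      rw [Function.comp_apply, twoSidedOrbit_eq_adjoint_pow_apply_add hA x _ N, sub_add_cancel,
        twoSidedOrbit_natCast]
      simp only [← star_eq_adjoint, star_pow]
    rw [hshift]
    exact h.adjoint_comp (norm_pow_apply_of_adjoint_comp_self hA N)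

end Orbit

theorem stmt_3_general {H : Type*} [NormedAddCommGroup H] [InnerProductSpace ℂ H] [CompleteSpace H]
    (A : H →L[ℂ] H)
    (hA₂ : ContinuousLinearMap.adjoint A ∘L A = 1)
    (x : H) (C : ℝ) :
    IsBesselSequenceWith (fun k : ℕ => (A ^ k) x) C ↔
      IsBesselSequenceWith
        (fun k : ℤ => if 0 ≤ k then (A ^ k.toNat) x
          else ((ContinuousLinearMap.adjoint A) ^ (-k).toNat) x) C := by
  refine ⟨isBesselSequenceWith_twoSidedOrbit hA₂, fun h ↦ ?_⟩
  have hrestrict := IsBesselSequenceWith.comp_injective (g := ((↑) : ℕ → ℤ)) h Nat.cast_injective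
  simpa only [Function.comp_def, ← twoSidedOrbit.eq_def, twoSidedOrbit_natCast] using hrestrict

theorem stmt_3 {H : Type*} [NormedAddCommGroup H] [InnerProductSpace ℂ H] [CompleteSpace H]
    (A : H →L[ℂ] H)
    (hA₁ : A ∘L ContinuousLinearMap.adjoint A = 1)
    (hA₂ : ContinuousLinearMap.adjoint A ∘L A = 1)
    (x : H) (C : ℝ) (hC : 0 < C) :
    IsBesselSequenceWith (fun k : ℕ => (A ^ k) x) C ↔
      IsBesselSequenceWith
        (fun k : ℤ => if 0 ≤ k then (A ^ k.toNat) x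
          else ((ContinuousLinearMap.adjoint A) ^ (-k).toNat) x) C :=
  stmt_3_general A hA₂ x C
end

section
/- Let μ be a finite positive Borel measure on ℝ with μ({t ∈ ℝ : |t| ≥ 1}) = 0, and set q_k := ∫ t^k dμ(t) for k ∈ ℕ. Then the following are equivalent: (a) there exists C > 0 such that μ({t : |t| > 1 − ε}) ≤ Cε for all ε ∈ (0,1); (b) there exists C > 0 such that |q_k| ≤ C/k for all k ≥ 1. -/
/-!
(a) ⇒ (b): by the layer-cake formula, `∫ |t|^k dμ = ∫₀^∞ k s^(k-1) μ(|t| > s) ds`, and the tail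
bound `μ(|t| > s) ≤ C (1 - s)` (zero for `s ≥ 1`) turns this into the Beta integral
`C ∫₀^1 k s^(k-1) (1 - s) ds = C / (k + 1)`.

(b) ⇒ (a): by Markov's inequality for the even moment `q_{2k} = ∫ |t|^(2k) dμ`,
`(1 - ε)^(2k) μ(|t| > 1 - ε) ≤ C / (2k)`; for `k ≈ 1 / (4ε)` Bernoulli's inequality gives
`(1 - ε)^(2k) ≥ 1 / 2`, hence `μ(|t| > 1 - ε) ≤ C / k ≤ 8 C ε`. Large `ε` are handled by `μ(ℝ)`.
-/

open MeasureTheory Set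

theorem integral_one_sub_mul_succ_mul_pow (n : ℕ) :
    ∫ s in (0 : ℝ)..1, (1 - s) * ((n + 1) * s ^ n) = 1 / (n + 2) := by
  have hsplit : (fun s : ℝ => (1 - s) * ((n + 1) * s ^ n)) =
      fun s : ℝ => (n + 1) * s ^ n - (n + 1) * s ^ (n + 1) := by
    funext s; ring
  rw [hsplit, intervalIntegral.integral_sub ((by fun_prop : Continuous _).intervalIntegrable _ _)
      ((by fun_prop : Continuous _).intervalIntegrable _ _),
    intervalIntegral.integral_const_mul, intervalIntegral.integral_const_mul, integral_pow,
    integral_pow]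
  field_simp
  push_cast
  ring

theorem setLIntegral_Ioi_ofReal_one_sub_mul_succ_mul_pow (n : ℕ) :
    ∫⁻ s in Ioi 0, ENNReal.ofReal ((1 - s) * ((n + 1) * s ^ n)) = ENNReal.ofReal (1 / (n + 2)) := by
  have hvanish : ∫⁻ s in Ioi 1, ENNReal.ofReal ((1 - s) * ((n + 1) * s ^ n)) = 0 := by
    refine setLIntegral_eq_zero measurableSet_Ioi fun s (hs : 1 < s) => ?_
    exact ENNReal.ofReal_eq_zero.mpr
      (mul_nonpos_of_nonpos_of_nonneg (by linarith) (by positivity))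
  rw [← Ioc_union_Ioi_eq_Ioi zero_le_one, lintegral_union measurableSet_Ioi Ioc_disjoint_Ioi_same,
    hvanish, add_zero, ← integral_one_sub_mul_succ_mul_pow,
    intervalIntegral.integral_of_le zero_le_one, ofReal_integral_eq_lintegral_ofReal]
  · exact Continuous.integrableOn_Ioc (by fun_prop)
  · filter_upwards [ae_restrict_mem measurableSet_Ioc] with s hs
    have : 0 ≤ 1 - s := sub_nonneg.mpr hs.2
    have : 0 < s := hs.1
    positivity

section

variable {α : Type*} [MeasurableSpace α] {μ : Measure α} {f : α → ℝ}

theorem lintegral_ofReal_pow_succ_eq (hf_nn : 0 ≤ᵐ[μ] f) (hf : AEMeasurable f μ) (n : ℕ) :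
    ∫⁻ x, ENNReal.ofReal (f x ^ (n + 1)) ∂μ =
      ∫⁻ s in Ioi 0, μ {x | s < f x} * ENNReal.ofReal ((n + 1) * s ^ n) := by
  have hprimitive : ∀ x : ℝ, ∫ s in (0 : ℝ)..x, (n + 1 : ℝ) * s ^ n = x ^ (n + 1) := by
    intro x
    rw [intervalIntegral.integral_const_mul, integral_pow]
    field_simp
    simp
  simp_rw [← hprimitive]
  refine lintegral_comp_eq_lintegral_meas_lt_mul μ hf_nn hf
    (fun t _ => (by fun_prop : Continuous fun s : ℝ => (n + 1 : ℝ) * s ^ n).intervalIntegrable 0 t)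
    ((ae_restrict_iff' measurableSet_Ioi).mpr (ae_of_all _ fun s (hs : 0 < s) => by positivity))

theorem lintegral_ofReal_pow_succ_le_of_meas_lt_le (hf_nn : 0 ≤ᵐ[μ] f) (hf : AEMeasurable f μ)
    {C : ℝ} (hC : 0 ≤ C)
    (htail : ∀ s > 0, μ {x | s < f x} ≤ ENNReal.ofReal (C * (1 - s))) (n : ℕ) :
    ∫⁻ x, ENNReal.ofReal (f x ^ (n + 1)) ∂μ ≤ ENNReal.ofReal (C / (n + 2)) := by
  rw [lintegral_ofReal_pow_succ_eq hf_nn hf]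
  calc ∫⁻ s in Ioi 0, μ {x | s < f x} * ENNReal.ofReal ((n + 1) * s ^ n)
      ≤ ∫⁻ s in Ioi 0, ENNReal.ofReal C * ENNReal.ofReal ((1 - s) * ((n + 1) * s ^ n)) := by
        refine setLIntegral_mono (by fun_prop) fun s (hs : 0 < s) => ?_
        rw [← ENNReal.ofReal_mul hC, ← mul_assoc]
        exact (mul_le_mul_left (htail s hs) _).trans_eq (ENNReal.ofReal_mul' (by positivity)).symm
    _ = ENNReal.ofReal (C / (n + 2)) := by
        rw [lintegral_const_mul _ (by fun_prop), setLIntegral_Ioi_ofReal_one_sub_mul_succ_mul_pow,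
          ← ENNReal.ofReal_mul hC, mul_one_div]

theorem pow_mul_measureReal_lt_le_integral_pow [IsFiniteMeasure μ] (hf_nn : 0 ≤ f) {n : ℕ}
    (hint : Integrable (fun x => f x ^ n) μ) {r : ℝ} (hr : 0 ≤ r) :
    r ^ n * μ.real {x | r < f x} ≤ ∫ x, f x ^ n ∂μ := by
  refine le_trans ?_ <|
    mul_meas_ge_le_integral_of_nonneg (ae_of_all _ fun x => pow_nonneg (hf_nn x) n) hint (r ^ n)
  refine mul_le_mul_of_nonneg_left (measureReal_mono fun x (hx : r < f x) => ?_) (by positivity)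
  exact pow_le_pow_left₀ hr hx.le n

end

theorem meas_abs_gt_le_of_meas_abs_gt_one_sub_le {μ : Measure ℝ} (hμ : μ {t : ℝ | 1 ≤ |t|} = 0)
    {C : ℝ} (h : ∀ ε ∈ Ioo (0 : ℝ) 1, μ {t : ℝ | 1 - ε < |t|} ≤ ENNReal.ofReal (C * ε)) :
    ∀ s > 0, μ {t : ℝ | s < |t|} ≤ ENNReal.ofReal (C * (1 - s)) := by
  intro s hs
  rcases lt_or_ge s 1 with hs1 | hs1
  · simpa using h (1 - s) ⟨by linarith, by linarith⟩
  · exact (measure_mono_null (fun t (ht : s < |t|) => hs1.trans ht.le) hμ).trans_le zero_le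

theorem abs_integral_pow_le_of_meas_abs_gt_one_sub_le {μ : Measure ℝ}
    (hμ : μ {t : ℝ | 1 ≤ |t|} = 0) {C : ℝ} (hC : 0 ≤ C)
    (h : ∀ ε ∈ Ioo (0 : ℝ) 1, μ {t : ℝ | 1 - ε < |t|} ≤ ENNReal.ofReal (C * ε))
    {k : ℕ} (hk : 1 ≤ k) : |∫ t, t ^ k ∂μ| ≤ C / k := by
  obtain ⟨n, rfl⟩ : ∃ n, k = n + 1 := ⟨k - 1, by omega⟩
  calc |∫ t, t ^ (n + 1) ∂μ| ≤ ∫ t, |t| ^ (n + 1) ∂μ := by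
        simpa only [pow_abs] using abs_integral_le_integral_abs
    _ = (∫⁻ t, ENNReal.ofReal (|t| ^ (n + 1)) ∂μ).toReal :=
        integral_eq_lintegral_of_nonneg_ae (ae_of_all _ fun t => by positivity) (by fun_prop)
    _ ≤ C / (n + 2) := ENNReal.toReal_le_of_le_ofReal (by positivity)
        (lintegral_ofReal_pow_succ_le_of_meas_lt_le (ae_of_all _ fun t => abs_nonneg t)
          (by fun_prop) hC (meas_abs_gt_le_of_meas_abs_gt_one_sub_le hμ h) n)
    _ ≤ C / (n + 1 : ℕ) := by
        push_cast
        gcongr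
        linarith

theorem integrable_pow_of_meas_abs_ge_one_eq_zero {μ : Measure ℝ} [IsFiniteMeasure μ]
    (hμ : μ {t : ℝ | 1 ≤ |t|} = 0) (n : ℕ) : Integrable (fun t : ℝ => t ^ n) μ := by
  refine (integrable_const (1 : ℝ)).mono' (by fun_prop) ?_
  filter_upwards [measure_eq_zero_iff_ae_notMem.mp hμ] with t ht
  rw [Real.norm_eq_abs, abs_pow]
  exact pow_le_one₀ (abs_nonneg t) (not_le.mp ht).le

theorem measureReal_abs_gt_one_sub_le_of_abs_integral_pow_le {μ : Measure ℝ} [IsFiniteMeasure μ]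
    (hμ : μ {t : ℝ | 1 ≤ |t|} = 0) {C : ℝ} (hC : 0 ≤ C)
    (h : ∀ k : ℕ, 1 ≤ k → |∫ t, t ^ k ∂μ| ≤ C / k) {ε : ℝ} (hε : 0 < ε) (hε' : ε ≤ 1 / 4) :
    μ.real {t : ℝ | 1 - ε < |t|} ≤ 8 * C * ε := by
  set k := ⌊1 / (4 * ε)⌋₊
  have hk : 1 ≤ k := Nat.one_le_floor_iff _ |>.mpr (by rw [le_div_iff₀ (by positivity)]; linarith)
  have hk_le : 4 * k * ε ≤ 1 := by
    have := Nat.floor_le (a := 1 / (4 * ε)) (by positivity)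
    rwa [le_div_iff₀ (by positivity), ← mul_assoc, mul_comm (k : ℝ)] at this
  have hk_ge : 1 ≤ 8 * k * ε := by
    have := Nat.lt_floor_add_one (1 / (4 * ε))
    rw [div_lt_iff₀ (by positivity)] at this
    have : (1 : ℝ) ≤ k := by exact_mod_cast hk
    nlinarith
  have hbernoulli : 1 / 2 ≤ (1 - ε) ^ (2 * k) := by
    calc (1 / 2 : ℝ) ≤ 1 + (2 * k : ℕ) * (-ε) := by push_cast; linarith
      _ ≤ (1 + -ε) ^ (2 * k) := one_add_mul_le_pow (by linarith) _
      _ = (1 - ε) ^ (2 * k) := by rw [← sub_eq_add_neg]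
  have hmarkov : (1 - ε) ^ (2 * k) * μ.real {t : ℝ | 1 - ε < |t|} ≤ ∫ t, t ^ (2 * k) ∂μ := by
    have hint : Integrable (fun t : ℝ => |t| ^ (2 * k)) μ := by
      simpa only [(even_two_mul k).pow_abs] using integrable_pow_of_meas_abs_ge_one_eq_zero hμ _
    simpa only [(even_two_mul k).pow_abs] using
      pow_mul_measureReal_lt_le_integral_pow (fun t => abs_nonneg t) hint (by linarith)
  have hmoment : ∫ t, t ^ (2 * k) ∂μ ≤ C / (2 * k) := by
    exact_mod_cast (le_abs_self _).trans (h (2 * k) (by omega))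
  have hk0 : (0 : ℝ) < k := by exact_mod_cast hk
  calc μ.real {t : ℝ | 1 - ε < |t|}
      ≤ 2 * ((1 - ε) ^ (2 * k) * μ.real {t : ℝ | 1 - ε < |t|}) := by
        nlinarith [measureReal_nonneg (μ := μ) (s := {t : ℝ | 1 - ε < |t|})]
    _ ≤ 2 * (C / (2 * k)) := by gcongr; exact hmarkov.trans hmoment
    _ = C / k := by field_simp
    _ ≤ 8 * C * ε := by rw [div_le_iff₀ hk0]; nlinarith

theorem exists_meas_abs_gt_one_sub_le_of_abs_integral_pow_le {μ : Measure ℝ} [IsFiniteMeasure μ]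
    (hμ : μ {t : ℝ | 1 ≤ |t|} = 0) {C : ℝ} (hC : 0 < C)
    (h : ∀ k : ℕ, 1 ≤ k → |∫ t, t ^ k ∂μ| ≤ C / k) :
    ∃ C' > 0, ∀ ε ∈ Ioo (0 : ℝ) 1, μ {t : ℝ | 1 - ε < |t|} ≤ ENNReal.ofReal (C' * ε) := by
  refine ⟨8 * C + 4 * μ.real univ, by positivity, fun ε ⟨hε, _⟩ => ?_⟩
  rw [ENNReal.le_ofReal_iff_toReal_le (measure_ne_top _ _) (by positivity), ← measureReal_def]
  have hμ_univ := measureReal_nonneg (μ := μ) (s := univ)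
  rcases le_or_gt ε (1 / 4) with hε' | hε'
  · have := measureReal_abs_gt_one_sub_le_of_abs_integral_pow_le hμ hC.le h hε hε'
    nlinarith
  · have := measureReal_mono (μ := μ) (subset_univ {t : ℝ | 1 - ε < |t|})
    nlinarith

theorem stmt_5 (μ : Measure ℝ) [IsFiniteMeasure μ]
    (hμ : μ {t : ℝ | 1 ≤ |t|} = 0)
    (q : ℕ → ℝ) (hq : ∀ k : ℕ, q k = ∫ t, t ^ k ∂μ) :
    (∃ C > 0, ∀ ε ∈ Set.Ioo (0 : ℝ) 1, μ {t : ℝ | 1 - ε < |t|} ≤ ENNReal.ofReal (C * ε)) ↔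
      (∃ C > 0, ∀ k : ℕ, 1 ≤ k → |q k| ≤ C / k) := by
  simp only [hq]
  constructor
  · rintro ⟨C, hC, h⟩
    exact ⟨C, hC, fun k hk => abs_integral_pow_le_of_meas_abs_gt_one_sub_le hμ hC.le h hk⟩
  · rintro ⟨C, hC, h⟩
    exact exists_meas_abs_gt_one_sub_le_of_abs_integral_pow_le hμ hC h
end

section
/- Let μ be a finite positive Borel measure on ℝ with μ({t ∈ ℝ : |t| ≥ 1}) = 0, and set q_k := ∫ t^k dμ(t) for k ∈ ℕ. Then the following are equivalent: (a) the Hankel matrix (q_{j+k})_{j,k∈ℕ} defines a bounded operator on ℓ²(ℕ), i.e., there exists C > 0 such that for every finitely supported sequence c : ℕ → ℂ one has ∑_{j∈ℕ} |∑_{k∈ℕ} q_{j+k} c_k|² ≤ C ∑_{k∈ℕ} |c_k|²; (b) there exists C > 0 such that μ({t : |t| > 1 − ε}) ≤ Cε for all ε ∈ (0,1). -/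
/-!
(b) ⇒ (a): by the layer-cake formula, `∫ |t|^(n+1) dμ = ∫₀¹ (n+1) x^n μ{|t| > x} dx ≤ C/(n+2)`,
so `|q (j + k)| ≲ 1/(j+k+1)` and the Hankel matrix is dominated entrywise by the Hilbert matrix,
which is bounded on `ℓ²` by the Schur test with weights `(k+1)^(-1/2)`.

(a) ⇒ (b): test the matrix on the indicator of the first `n` even indices and keep the first `n`
even rows. The entries met are moments of even order `< 4n`; their integrands are nonnegative and
at least `1/2` on `{1 - ε < |t|}` as soon as `8nε ≤ 1`. So each of these rows has sum at least
`n M / 2`, where `M = μ{1 - ε < |t|}`, and boundedness gives `n (n M / 2)² ≤ C n`. Taking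
`n = ⌊1/(8ε)⌋` yields `M ≤ 32 √C ε`.
-/

open MeasureTheory Finset

theorem Finset.sum_sq_le_of_schur_test {ι κ : Type*} (s : Finset ι) (t : Finset κ)
    {K : ι → κ → ℝ} {p : ι → ℝ} {r : κ → ℝ} {A B : ℝ}
    (hK : ∀ j ∈ s, ∀ k ∈ t, 0 ≤ K j k) (hr : ∀ k ∈ t, 0 < r k) (hA : 0 ≤ A)
    (hrow : ∀ j ∈ s, ∑ k ∈ t, K j k * r k ≤ A * p j)
    (hcol : ∀ k ∈ t, ∑ j ∈ s, K j k * p j ≤ B * r k) (b : κ → ℝ) :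
    ∑ j ∈ s, (∑ k ∈ t, K j k * b k) ^ 2 ≤ A * B * ∑ k ∈ t, b k ^ 2 := by
  have hw : ∀ j ∈ s, 0 ≤ ∑ k ∈ t, K j k * (b k ^ 2 / r k) := fun j hj =>
    sum_nonneg fun k hk => mul_nonneg (hK j hj k hk) (div_nonneg (sq_nonneg _) (hr k hk).le)
  calc ∑ j ∈ s, (∑ k ∈ t, K j k * b k) ^ 2
      ≤ ∑ j ∈ s, (∑ k ∈ t, K j k * r k) * ∑ k ∈ t, K j k * (b k ^ 2 / r k) := by
        refine sum_le_sum fun j hj => sum_sq_le_sum_mul_sum_of_sq_le_mul t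
          (fun k hk => mul_nonneg (hK j hj k hk) (hr k hk).le)
          (fun k hk => mul_nonneg (hK j hj k hk) (div_nonneg (sq_nonneg _) (hr k hk).le))
          fun k hk => le_of_eq ?_
        field_simp [(hr k hk).ne']
    _ ≤ ∑ j ∈ s, A * p j * ∑ k ∈ t, K j k * (b k ^ 2 / r k) :=
        sum_le_sum fun j hj => mul_le_mul_of_nonneg_right (hrow j hj) (hw j hj)
    _ = A * ∑ k ∈ t, b k ^ 2 / r k * ∑ j ∈ s, K j k * p j := by
        simp_rw [mul_sum]
        rw [sum_comm]
        refine sum_congr rfl fun k _ => sum_congr rfl fun j _ => by ring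
    _ ≤ A * ∑ k ∈ t, b k ^ 2 / r k * (B * r k) := by
        gcongr with k hk
        · exact div_nonneg (sq_nonneg _) (hr k hk).le
        · exact hcol k hk
    _ = A * B * ∑ k ∈ t, b k ^ 2 := by
        rw [mul_sum, mul_sum]
        exact sum_congr rfl fun k hk => by field_simp [(hr k hk).ne']

theorem sum_le_sub_of_le_sub_succ {t : Finset ℕ} {m n : ℕ} {f g : ℕ → ℝ} (hmn : m ≤ n)
    (ht : t ⊆ Ico m n) (hf : ∀ k ∈ Ico m n, 0 ≤ f k)
    (hfg : ∀ k ∈ Ico m n, f k ≤ g (k + 1) - g k) : ∑ k ∈ t, f k ≤ g n - g m :=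
  calc ∑ k ∈ t, f k ≤ ∑ k ∈ Ico m n, f k := sum_le_sum_of_subset_of_nonneg ht fun k hk _ => hf k hk
    _ ≤ ∑ k ∈ Ico m n, (g (k + 1) - g k) := sum_le_sum hfg
    _ = g n - g m := sum_Ico_sub g hmn

theorem inv_sqrt_add_one_le (x : ℝ) (hx : 0 ≤ x) : (√(x + 1))⁻¹ ≤ 2 * (√(x + 1) - √x) := by
  have ha := Real.sq_sqrt hx
  have hb := Real.sq_sqrt (by linarith : 0 ≤ x + 1)
  have hpos : 0 < √(x + 1) := Real.sqrt_pos.2 (by linarith)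
  rw [inv_le_iff_one_le_mul₀' hpos]
  nlinarith [sq_nonneg (√(x + 1) - √x)]

theorem inv_mul_inv_sqrt_add_one_le {x : ℝ} (hx : 0 < x) :
    (x + 1)⁻¹ * (√(x + 1))⁻¹ ≤ 2 * ((√x)⁻¹ - (√(x + 1))⁻¹) := by
  have ha := Real.sq_sqrt hx.le
  have hb := Real.sq_sqrt (by linarith : 0 ≤ x + 1)
  have hab : √x ≤ √(x + 1) := Real.sqrt_le_sqrt (by linarith)
  have ha0 : 0 < √x := Real.sqrt_pos.2 hx
  set a := √x
  set b := √(x + 1)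
  have hb0 : 0 < b := ha0.trans_le hab
  rw [← hb]
  field_simp
  nlinarith [mul_nonneg (sub_nonneg.2 hab) (by nlinarith : 0 ≤ 2 * b ^ 2 - a * (b + a))]

theorem sum_inv_sqrt_add_one_le {t : Finset ℕ} {n : ℕ} (ht : ∀ k ∈ t, k < n) :
    ∑ k ∈ t, (√((k : ℝ) + 1))⁻¹ ≤ 2 * √(n : ℝ) := by
  have := sum_le_sub_of_le_sub_succ (f := fun k => (√((k : ℝ) + 1))⁻¹)
    (g := fun k => 2 * √(k : ℝ)) (Nat.zero_le n) (fun k hk => mem_Ico.2 ⟨k.zero_le, ht k hk⟩)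
    (fun k _ => by positivity) fun k _ => by
      push_cast
      linarith [inv_sqrt_add_one_le (k : ℝ) k.cast_nonneg]
  simpa using this

theorem sum_inv_mul_inv_sqrt_add_one_le {t : Finset ℕ} {m : ℕ} (hm : 0 < m)
    (ht : ∀ k ∈ t, m ≤ k) :
    ∑ k ∈ t, ((k : ℝ) + 1)⁻¹ * (√((k : ℝ) + 1))⁻¹ ≤ 2 * (√(m : ℝ))⁻¹ := by
  have hsub : t ⊆ Ico m (t.sup id + 1) := fun k hk =>
    mem_Ico.2 ⟨ht k hk, Nat.lt_succ_of_le (le_sup (f := id) hk)⟩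
  have := sum_le_sub_of_le_sub_succ (f := fun k => ((k : ℝ) + 1)⁻¹ * (√((k : ℝ) + 1))⁻¹)
    (g := fun k => -2 * (√(k : ℝ))⁻¹) (le_max_left m (t.sup id + 1)) (hsub.trans
      (Ico_subset_Ico_right (le_max_right _ _))) (fun k _ => by positivity) fun k hk => by
      have hk0 : (0 : ℝ) < k := by exact_mod_cast hm.trans_le (mem_Ico.1 hk).1
      push_cast
      linarith [inv_mul_inv_sqrt_add_one_le hk0]
  linarith [(by positivity : 0 ≤ (√((max m (t.sup id + 1) : ℕ) : ℝ))⁻¹)]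

theorem sum_inv_add_mul_inv_sqrt_le (j : ℕ) (t : Finset ℕ) :
    ∑ k ∈ t, ((j : ℝ) + k + 1)⁻¹ * (√((k : ℝ) + 1))⁻¹ ≤ 4 * (√((j : ℝ) + 1))⁻¹ := by
  have hj : (0 : ℝ) < j + 1 := by positivity
  rw [← sum_filter_add_sum_filter_not t (· ≤ j)]
  have head :=
    calc ∑ k ∈ t with k ≤ j, ((j : ℝ) + k + 1)⁻¹ * (√((k : ℝ) + 1))⁻¹
        ≤ ∑ k ∈ t with k ≤ j, ((j : ℝ) + 1)⁻¹ * (√((k : ℝ) + 1))⁻¹ := by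
          gcongr
          exact le_add_of_nonneg_right k.cast_nonneg
      _ = ((j : ℝ) + 1)⁻¹ * ∑ k ∈ t with k ≤ j, (√((k : ℝ) + 1))⁻¹ := by rw [mul_sum]
      _ ≤ ((j : ℝ) + 1)⁻¹ * (2 * √((j + 1 : ℕ) : ℝ)) := by
          gcongr
          exact sum_inv_sqrt_add_one_le fun k hk => Nat.lt_succ_of_le (mem_filter.1 hk).2
      _ = 2 * (√((j : ℝ) + 1))⁻¹ := by
          push_cast
          field_simp
          exact Real.sq_sqrt hj.le
  have tail :=
    calc ∑ k ∈ t with ¬k ≤ j, ((j : ℝ) + k + 1)⁻¹ * (√((k : ℝ) + 1))⁻¹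
        ≤ ∑ k ∈ t with ¬k ≤ j, ((k : ℝ) + 1)⁻¹ * (√((k : ℝ) + 1))⁻¹ := by
          gcongr
          exact le_add_of_nonneg_left j.cast_nonneg
      _ ≤ 2 * (√((j + 1 : ℕ) : ℝ))⁻¹ :=
          sum_inv_mul_inv_sqrt_add_one_le j.succ_pos fun k hk => not_le.1 (mem_filter.1 hk).2
  push_cast at tail
  linarith

theorem hilbert_inequality (s t : Finset ℕ) (b : ℕ → ℝ) :
    ∑ j ∈ s, (∑ k ∈ t, ((j : ℝ) + k + 1)⁻¹ * b k) ^ 2 ≤ 16 * ∑ k ∈ t, b k ^ 2 := by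
  have h := sum_sq_le_of_schur_test s t (K := fun j k => ((j : ℝ) + k + 1)⁻¹)
    (p := fun k => (√((k : ℝ) + 1))⁻¹) (A := 4) (B := 4) (fun _ _ _ _ => by positivity)
    (fun _ _ => by positivity) (by norm_num) (fun j _ => sum_inv_add_mul_inv_sqrt_le j t)
    (fun k _ => by
      simpa only [add_right_comm, add_comm (_ : ℝ)] using sum_inv_add_mul_inv_sqrt_le k s) b
  norm_num at h ⊢
  exact h

def HankelBoundedBy (q : ℕ → ℝ) (C : ℝ) : Prop :=
  ∀ c : ℕ →₀ ℂ, ∀ F : Finset ℕ,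
    ∑ j ∈ F, ‖∑ k ∈ c.support, (q (j + k) : ℂ) * c k‖ ^ 2 ≤ C * ∑ k ∈ c.support, ‖c k‖ ^ 2

theorem hankelBoundedBy_of_abs_le {q : ℕ → ℝ} {A : ℝ} (hq : ∀ m : ℕ, |q m| ≤ A / (m + 1)) :
    HankelBoundedBy q (16 * A ^ 2) := by
  intro c F
  calc ∑ j ∈ F, ‖∑ k ∈ c.support, (q (j + k) : ℂ) * c k‖ ^ 2
      ≤ ∑ j ∈ F, (∑ k ∈ c.support, ((j : ℝ) + k + 1)⁻¹ * (A * ‖c k‖)) ^ 2 := by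
        gcongr with j
        refine (norm_sum_le _ _).trans (sum_le_sum fun k _ => ?_)
        rw [norm_mul, Complex.norm_real, Real.norm_eq_abs]
        calc |q (j + k)| * ‖c k‖ ≤ A / ((j + k : ℕ) + 1) * ‖c k‖ := by gcongr; exact hq (j + k)
          _ = _ := by push_cast; ring
    _ ≤ 16 * ∑ k ∈ c.support, (A * ‖c k‖) ^ 2 := hilbert_inequality _ _ _
    _ = 16 * A ^ 2 * ∑ k ∈ c.support, ‖c k‖ ^ 2 := by simp_rw [mul_pow, ← mul_sum]; ring

theorem HankelBoundedBy.sum_sq_sum_le {q : ℕ → ℝ} {C : ℝ} (h : HankelBoundedBy q C)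
    (S F : Finset ℕ) : ∑ j ∈ F, (∑ k ∈ S, q (j + k)) ^ 2 ≤ C * #S := by
  set c : ℕ →₀ ℂ := Finsupp.indicator S fun _ _ => 1
  have hsum : ∀ {M : Type} [AddCommMonoid M] (f : ℕ → ℂ → M), (∀ k, f k 0 = 0) →
      ∑ k ∈ c.support, f k (c k) = ∑ k ∈ S, f k 1 := fun f hf => by
    rw [sum_subset (Finsupp.support_indicator_subset _ _) fun k _ hk => by
      rw [Finsupp.notMem_support_iff.1 hk, hf]]
    exact sum_congr rfl fun k hk => by rw [Finsupp.indicator_of_mem hk]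
  have := h c F
  rw [hsum (fun k x => ‖x‖ ^ 2) (by simp)] at this
  have hrow : ∀ j, ∑ k ∈ c.support, (q (j + k) : ℂ) * c k = ((∑ k ∈ S, q (j + k) : ℝ) : ℂ) :=
      fun j => by
    rw [hsum (fun k x => (q (j + k) : ℂ) * x) (by simp)]
    push_cast
    simp
  simpa only [hrow, Complex.norm_real, Real.norm_eq_abs, sq_abs, norm_one, one_pow, sum_const,
    nsmul_eq_mul, mul_one] using this

theorem integral_mul_pow_one_sub (C : ℝ) (n : ℕ) :
    ∫ x in (0 : ℝ)..1, C * (1 - x) * ((n + 1) * x ^ n) = C / (n + 2) := by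
  have : (fun x : ℝ => C * (1 - x) * ((n + 1) * x ^ n)) =
      fun x => C * (n + 1) * x ^ n - C * (n + 1) * x ^ (n + 1) := by
    funext x; ring
  rw [this, intervalIntegral.integral_sub ((by fun_prop : Continuous _).intervalIntegrable _ _)
    ((by fun_prop : Continuous _).intervalIntegrable _ _)]
  simp only [intervalIntegral.integral_const_mul, integral_pow]
  field_simp
  push_cast
  ring

theorem lintegral_ofReal_pow_succ_eq_lintegral_meas_lt_mul {α : Type*} [MeasurableSpace α]
    (μ : Measure α) {f : α → ℝ} (hf : 0 ≤ᵐ[μ] f) (hfm : AEMeasurable f μ) (n : ℕ) :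
    ∫⁻ a, ENNReal.ofReal (f a ^ (n + 1)) ∂μ =
      ∫⁻ x in Set.Ioi 0, μ {a | x < f a} * ENNReal.ofReal ((n + 1) * x ^ n) := by
  rw [← lintegral_comp_eq_lintegral_meas_lt_mul μ hf hfm
    (fun _ _ => (by fun_prop : Continuous fun x : ℝ => (n + 1) * x ^ n).intervalIntegrable _ _)]
  · congr 1
    funext a
    rw [intervalIntegral.integral_const_mul, integral_pow]
    congr 1
    field_simp
    simp
  · filter_upwards [ae_restrict_mem measurableSet_Ioi] with x hx
    exact mul_nonneg (by positivity) (pow_nonneg (le_of_lt hx) n)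

theorem half_le_pow_of_one_sub_lt_abs {ε t : ℝ} {e : ℕ} (he : Even e) (hε1 : ε ≤ 1)
    (ht : 1 - ε < |t|) (heε : e * ε ≤ 1 / 2) : 1 / 2 ≤ t ^ e :=
  calc 1 / 2 ≤ 1 + e * (-ε) := by linarith
    _ ≤ (1 + -ε) ^ e := one_add_mul_le_pow (by linarith) e
    _ = (1 - ε) ^ e := by ring
    _ ≤ |t| ^ e := pow_le_pow_left₀ (by linarith) ht.le e
    _ = t ^ e := he.pow_abs t

section MomentsOfMeasuresOnUnitInterval

variable {μ : Measure ℝ} [IsFiniteMeasure μ]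

theorem integrable_pow_of_ae_abs_le_one (hμ : ∀ᵐ t ∂μ, |t| ≤ 1) (n : ℕ) :
    Integrable (fun t => t ^ n) μ :=
  Integrable.of_bound (by fun_prop) 1 <| by
    filter_upwards [hμ] with t ht
    rw [norm_pow, Real.norm_eq_abs]
    exact pow_le_one₀ (abs_nonneg t) ht

theorem integral_abs_pow_succ_le (hμ : ∀ᵐ t ∂μ, |t| ≤ 1) {C : ℝ} (hC : 0 ≤ C)
    (hb : ∀ ε ∈ Set.Ioo (0 : ℝ) 1, μ {t | 1 - ε < |t|} ≤ ENNReal.ofReal (C * ε)) (n : ℕ) :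
    ∫ t, |t| ^ (n + 1) ∂μ ≤ C / (n + 2) := by
  set φ : ℝ → ℝ := fun x => C * (1 - x) * ((n + 1) * x ^ n)
  have hpt : ∀ x ∈ Set.Ioi (0 : ℝ), μ {t | x < |t|} * ENNReal.ofReal ((n + 1) * x ^ n) ≤
      (Set.Iio 1).indicator (fun x => ENNReal.ofReal (φ x)) x := by
    intro x (hx : 0 < x)
    rcases lt_or_ge x 1 with hx1 | hx1
    · rw [Set.indicator_of_mem (Set.mem_Iio.2 hx1),
        ENNReal.ofReal_mul (by nlinarith : 0 ≤ C * (1 - x))]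
      gcongr
      simpa using hb (1 - x) ⟨by linarith, by linarith⟩
    · have hnull : μ {t | x < |t|} = 0 :=
        measure_mono_null (fun t (ht : x < |t|) => (by linarith : ¬|t| ≤ 1)) (ae_iff.1 hμ)
      simp [hnull]
  have hφ : 0 ≤ᵐ[volume.restrict (Set.Ioo (0 : ℝ) 1)] φ := by
    filter_upwards [ae_restrict_mem measurableSet_Ioo] with x hx
    exact mul_nonneg (mul_nonneg hC (by linarith [hx.2])) (by positivity [hx.1])
  have hφint : IntegrableOn φ (Set.Ioo 0 1) :=
    (by fun_prop : Continuous φ).integrableOn_Icc.mono_set Set.Ioo_subset_Icc_self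
  refine (ENNReal.ofReal_le_ofReal_iff (by positivity)).1 ?_
  calc ENNReal.ofReal (∫ t, |t| ^ (n + 1) ∂μ)
      = ∫⁻ t, ENNReal.ofReal (|t| ^ (n + 1)) ∂μ :=
        ofReal_integral_eq_lintegral_ofReal
          (by simpa only [abs_pow] using (integrable_pow_of_ae_abs_le_one hμ (n + 1)).abs)
          (ae_of_all _ fun t => by positivity)
    _ ≤ ∫⁻ x in Set.Ioi 0, (Set.Iio 1).indicator (fun x => ENNReal.ofReal (φ x)) x := by
        rw [lintegral_ofReal_pow_succ_eq_lintegral_meas_lt_mul μ (ae_of_all _ abs_nonneg)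
          measurable_abs.aemeasurable]
        exact setLIntegral_mono' measurableSet_Ioi hpt
    _ = ∫⁻ x in Set.Ioo 0 1, ENNReal.ofReal (φ x) := by
        rw [lintegral_indicator measurableSet_Iio, Measure.restrict_restrict measurableSet_Iio,
          Set.Iio_inter_Ioi]
    _ = ENNReal.ofReal (C / (n + 2)) := by
        rw [← ofReal_integral_eq_lintegral_ofReal hφint hφ, ← integral_Ioc_eq_integral_Ioo,
          ← intervalIntegral.integral_of_le zero_le_one, integral_mul_pow_one_sub]

theorem abs_integral_pow_le (hμ : ∀ᵐ t ∂μ, |t| ≤ 1) {C : ℝ} (hC : 0 ≤ C)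
    (hb : ∀ ε ∈ Set.Ioo (0 : ℝ) 1, μ {t | 1 - ε < |t|} ≤ ENNReal.ofReal (C * ε)) (m : ℕ) :
    |∫ t, t ^ m ∂μ| ≤ (C + μ.real Set.univ) / (m + 1) := by
  rcases m with _ | n
  · simpa [abs_of_nonneg measureReal_nonneg] using hC
  · calc |∫ t, t ^ (n + 1) ∂μ| ≤ ∫ t, |t| ^ (n + 1) ∂μ := by
          simpa only [abs_pow] using abs_integral_le_integral_abs (f := fun t => t ^ (n + 1))
      _ ≤ C / (n + 2) := integral_abs_pow_succ_le hμ hC hb n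
      _ ≤ (C + μ.real Set.univ) / ((n + 1 : ℕ) + 1) := by
          push_cast
          rw [add_assoc, one_add_one_eq_two]
          gcongr
          exact le_add_of_nonneg_right measureReal_nonneg

theorem half_mul_measureReal_le_sum_integral_pow (hμ : ∀ᵐ t ∂μ, |t| ≤ 1) {ε : ℝ}
    (hε1 : ε ≤ 1) {n l : ℕ} (hl : l < n) (hnε : 8 * n * ε ≤ 1) :
    n / 2 * μ.real {t | 1 - ε < |t|} ≤ ∑ i ∈ range n, ∫ t, t ^ (2 * l + 2 * i) ∂μ := by
  have hE : MeasurableSet {t : ℝ | 1 - ε < |t|} := measurableSet_lt measurable_const measurable_abs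
  have hint : Integrable (fun t => ∑ i ∈ range n, t ^ (2 * l + 2 * i)) μ :=
    integrable_finsetSum _ fun i _ => integrable_pow_of_ae_abs_le_one hμ _
  have hlow : ∀ t ∈ {t : ℝ | 1 - ε < |t|}, (n : ℝ) / 2 ≤ ∑ i ∈ range n, t ^ (2 * l + 2 * i) := by
    intro t ht
    calc (n : ℝ) / 2 = ∑ i ∈ range n, (1 / 2 : ℝ) := by simp; ring
      _ ≤ _ := sum_le_sum fun i hi => by
        have hexp : ((2 * l + 2 * i : ℕ) : ℝ) ≤ 4 * n := by
          exact_mod_cast (by have := mem_range.1 hi; omega : 2 * l + 2 * i ≤ 4 * n)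
        refine half_le_pow_of_one_sub_lt_abs ⟨l + i, by ring⟩ hε1 ht ?_
        rcases le_or_gt 0 ε with hε0 | hε0 <;> nlinarith
  rw [← integral_finsetSum _ fun i _ => integrable_pow_of_ae_abs_le_one hμ _]
  calc n / 2 * μ.real {t | 1 - ε < |t|}
      ≤ ∫ t in {t | 1 - ε < |t|}, ∑ i ∈ range n, t ^ (2 * l + 2 * i) ∂μ :=
        setIntegral_ge_of_const_le_real hE (measure_ne_top μ _) hlow hint.integrableOn
    _ ≤ ∫ t, ∑ i ∈ range n, t ^ (2 * l + 2 * i) ∂μ :=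
        setIntegral_le_integral hint (ae_of_all _ fun t =>
          sum_nonneg fun i _ => Even.pow_nonneg (⟨l + i, by ring⟩ : Even (2 * l + 2 * i)) t)

theorem sq_mul_measureReal_le_of_hankelBoundedBy (hμ : ∀ᵐ t ∂μ, |t| ≤ 1) {C : ℝ}
    (ha : HankelBoundedBy (fun k => ∫ t, t ^ k ∂μ) C) {ε : ℝ} (hε1 : ε ≤ 1)
    {n : ℕ} (hn : 0 < n) (hnε : 8 * n * ε ≤ 1) :
    (n * μ.real {t | 1 - ε < |t|}) ^ 2 ≤ 4 * C := by
  set M := μ.real {t | 1 - ε < |t|}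
  set S := (range n).map ⟨(2 * ·), mul_right_injective₀ two_ne_zero⟩
  have hrow : ∀ j ∈ S, n / 2 * M ≤ ∑ k ∈ S, ∫ t, t ^ (j + k) ∂μ := by
    intro j hj
    obtain ⟨l, hl, rfl⟩ := mem_map.1 hj
    simpa [S, sum_map] using
      half_mul_measureReal_le_sum_integral_pow hμ hε1 (mem_range.1 hl) hnε
  have hM : 0 ≤ n / 2 * M := by positivity
  have hsum := calc (n : ℝ) * (n / 2 * M) ^ 2 = ∑ j ∈ S, (n / 2 * M) ^ 2 := by simp [S]
      _ ≤ ∑ j ∈ S, (∑ k ∈ S, ∫ t, t ^ (j + k) ∂μ) ^ 2 :=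
        sum_le_sum fun j hj => pow_le_pow_left₀ hM (hrow j hj) 2
      _ ≤ C * #S := ha.sum_sq_sum_le S S
      _ = C * n := by simp [S]
  have hn' : (0 : ℝ) < n := by exact_mod_cast hn
  nlinarith

theorem exists_measure_le_of_hankelBoundedBy (hμ : ∀ᵐ t ∂μ, |t| ≤ 1) {C : ℝ} (hC : 0 < C)
    (ha : HankelBoundedBy (fun k => ∫ t, t ^ k ∂μ) C) :
    ∃ K > 0, ∀ ε ∈ Set.Ioo (0 : ℝ) 1, μ {t | 1 - ε < |t|} ≤ ENNReal.ofReal (K * ε) := by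
  refine ⟨32 * √C + 8 * μ.real Set.univ, by positivity, ?_⟩
  rintro ε ⟨hε0, hε1⟩
  rw [← ofReal_measureReal]
  refine ENNReal.ofReal_le_ofReal ?_
  have hT : 0 ≤ μ.real Set.univ := measureReal_nonneg
  rcases lt_or_ge ε (1 / 8) with hε8 | hε8
  · set n := ⌊(8 * ε)⁻¹⌋₊
    have h8 : 1 ≤ (8 * ε)⁻¹ := by rw [one_le_inv₀ (by positivity)]; linarith
    have hn : 1 ≤ n := Nat.le_floor (by exact_mod_cast h8)
    have hn' : (1 : ℝ) ≤ n := by exact_mod_cast hn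
    have hnε : 8 * n * ε ≤ 1 := by
      have := mul_le_mul_of_nonneg_right (Nat.floor_le (by positivity : 0 ≤ (8 * ε)⁻¹))
        (by positivity : 0 ≤ 8 * ε)
      rw [inv_mul_cancel₀ (by positivity)] at this
      linarith
    have hnε' : 1 < 16 * n * ε := by
      have := mul_lt_mul_of_pos_right (Nat.lt_floor_add_one (8 * ε)⁻¹) (by positivity : 0 < 8 * ε)
      rw [inv_mul_cancel₀ (by positivity)] at this
      nlinarith
    have hsq := sq_mul_measureReal_le_of_hankelBoundedBy hμ ha hε1.le hn hnε
    have hnM : n * μ.real {t | 1 - ε < |t|} ≤ 2 * √C := by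
      refine (pow_le_pow_iff_left₀ (by positivity) (by positivity) two_ne_zero).1 (hsq.trans_eq ?_)
      rw [mul_pow, Real.sq_sqrt hC.le]
      norm_num
    nlinarith [measureReal_nonneg (μ := μ) (s := {t | 1 - ε < |t|}), Real.sqrt_nonneg C]
  · calc μ.real {t | 1 - ε < |t|} ≤ μ.real Set.univ := measureReal_mono (Set.subset_univ _)
      _ ≤ (32 * √C + 8 * μ.real Set.univ) * ε := by nlinarith [Real.sqrt_nonneg C]

end MomentsOfMeasuresOnUnitInterval

theorem stmt_6 (μ : Measure ℝ) [IsFiniteMeasure μ]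
    (hμ : μ {t : ℝ | 1 ≤ |t|} = 0)
    (q : ℕ → ℝ) (hq : ∀ k : ℕ, q k = ∫ t, t ^ k ∂μ) :
    (∃ C > 0, ∀ c : ℕ →₀ ℂ, ∀ F : Finset ℕ,
        ∑ j ∈ F, ‖∑ k ∈ c.support, (q (j + k) : ℂ) * c k‖ ^ 2 ≤
          C * ∑ k ∈ c.support, ‖c k‖ ^ 2) ↔
      (∃ C > 0, ∀ ε ∈ Set.Ioo (0 : ℝ) 1, μ {t : ℝ | 1 - ε < |t|} ≤ ENNReal.ofReal (C * ε)) := by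
  obtain rfl : q = fun k => ∫ t, t ^ k ∂μ := funext hq
  have hμ' : ∀ᵐ t ∂μ, |t| ≤ 1 :=
    ae_iff.2 (measure_mono_null (fun t (ht : ¬|t| ≤ 1) => (not_le.1 ht).le) hμ)
  constructor
  · rintro ⟨C, hC, ha⟩
    exact exists_measure_le_of_hankelBoundedBy hμ' hC ha
  · rintro ⟨C, hC, hb⟩
    have hpos : 0 < 16 * (C + μ.real Set.univ) ^ 2 := by positivity
    exact ⟨_, hpos, hankelBoundedBy_of_abs_le (q := fun k => ∫ t, t ^ k ∂μ)
      (A := C + μ.real Set.univ) (abs_integral_pow_le hμ' hC.le hb)⟩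
end

section
/- The sequence of monomials (e_k)_{k∈ℕ}, e_k(t) = t^k, is a Bessel sequence in L²((−1,1), Lebesgue measure) with Bessel bound 2π; that is, ∑_{k∈ℕ} |∫_{−1}^{1} g(t) t^k dt|² ≤ 2π ∫_{−1}^{1} |g(t)|² dt for every g ∈ L²(−1,1). -/
/-!
Schur test with the weight `w t = √(1 - t²)`. By Cauchy–Schwarz,
`|∫ g tᵏ|² ≤ (∫ |g|² w |t|ᵏ) · Aₖ` with `Aₖ = ∫ |t|ᵏ / w = ∫_{-π/2}^{π/2} |sin θ|ᵏ dθ`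
(substitute `t = sin θ`). Summing the geometric series under the integral,
`∑ₖ Aₖ |t|ᵏ = ∫ dθ / (1 - |t| |sin θ|) ≤ 2π / w t`, so the weights cancel and the sum over `k`
is at most `2π ∫ |g|²`.
-/

open MeasureTheory Real Set

lemma lintegral_sq_le_mul_of_sq_le {α : Type*} [MeasurableSpace α] {μ : Measure α}
    {f g h : α → ENNReal} (hg : AEMeasurable g μ) (hh : AEMeasurable h μ)
    (hfgh : ∀ᵐ x ∂μ, f x ^ 2 ≤ g x * h x) :
    (∫⁻ x, f x ∂μ) ^ 2 ≤ (∫⁻ x, g x ∂μ) * ∫⁻ x, h x ∂μ := by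
  have hsq (a : ENNReal) : (a ^ (2⁻¹ : ℝ)) ^ 2 = a := by
    rw [← ENNReal.rpow_two, ← ENNReal.rpow_mul]; norm_num
  have hf : ∫⁻ x, f x ∂μ ≤ ∫⁻ x, g x ^ (2⁻¹ : ℝ) * h x ^ (2⁻¹ : ℝ) ∂μ := by
    refine lintegral_mono_ae (hfgh.mono fun x hx => ?_)
    rwa [← ENNReal.pow_le_pow_left_iff two_ne_zero, mul_pow, hsq, hsq]
  have holder := ENNReal.lintegral_mul_le_Lp_mul_Lq μ Real.HolderConjugate.two_two
    (hg.pow_const (2⁻¹ : ℝ)) (hh.pow_const (2⁻¹ : ℝ))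
  simp only [ENNReal.rpow_two, hsq, one_div] at holder
  calc (∫⁻ x, f x ∂μ) ^ 2 ≤ ((∫⁻ x, g x ∂μ) ^ (2⁻¹ : ℝ) * (∫⁻ x, h x ∂μ) ^ (2⁻¹ : ℝ)) ^ 2 := by
        gcongr; exact hf.trans holder
    _ = (∫⁻ x, g x ∂μ) * ∫⁻ x, h x ∂μ := by rw [mul_pow, hsq, hsq]

/-- Antiderivative from the substitution `u = tan (θ / 2)`. -/
lemma hasDerivAt_arctan_tan_half {r c θ : ℝ} (hc : c ^ 2 = 1 - r ^ 2) (hc0 : c ≠ 0)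
    (hθ : 0 < cos (θ / 2)) :
    HasDerivAt (fun θ => 2 / c * arctan ((tan (θ / 2) - r) / c)) (1 - r * sin θ)⁻¹ θ := by
  have htan : HasDerivAt (fun x => tan (x / 2)) (1 / cos (θ / 2) ^ 2 * (1 / 2)) θ := by
    exact (hasDerivAt_tan hθ.ne').comp θ ((hasDerivAt_id θ).div_const 2)
  refine (((hasDerivAt_arctan _).comp θ ((htan.sub_const r).div_const c)).const_mul
    (2 / c)).congr_deriv ?_
  have hsin : sin θ = 2 * sin (θ / 2) * cos (θ / 2) := by
    rw [← sin_two_mul]; ring_nf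
  have hden : 1 - 2 * sin (θ / 2) * cos (θ / 2) * r ≠ 0 := by
    have : (r * sin θ) ^ 2 < 1 := by
      have hc2 : 0 < c ^ 2 := by positivity
      nlinarith [sin_sq_le_one θ, sq_nonneg (r * sin θ)]
    rw [← hsin]
    nlinarith
  rw [hsin, tan_eq_sin_div_cos]
  field_simp
  linear_combination -sin_sq_add_cos_sq (θ / 2) - cos (θ / 2) ^ 2 * hc

lemma integral_inv_one_sub_mul_sin_le {r : ℝ} (hr : |r| < 1) :
    ∫ θ in (0)..(π / 2), (1 - r * sin θ)⁻¹ ≤ π / √(1 - r ^ 2) := by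
  obtain ⟨hr₁, hr₂⟩ := abs_lt.1 hr
  set c := √(1 - r ^ 2)
  have hc0 : 0 < c := sqrt_pos.2 (by nlinarith)
  have hc : c ^ 2 = 1 - r ^ 2 := sq_sqrt (by nlinarith)
  have hpos (θ : ℝ) : 0 < 1 - r * sin θ := by
    nlinarith [sin_sq_le_one θ, sq_nonneg (r * sin θ), sq_nonneg (1 - r * sin θ)]
  have hint : IntervalIntegrable (fun θ => (1 - r * sin θ)⁻¹) volume 0 (π / 2) :=
    ((continuous_const.sub (continuous_const.mul continuous_sin)).inv₀
      fun θ => (hpos θ).ne').intervalIntegrable _ _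
  rw [intervalIntegral.integral_eq_sub_of_hasDerivAt
    (fun θ hθ => hasDerivAt_arctan_tan_half hc hc0.ne' ?_) hint]
  · have hprod : (1 - r) / c * (r / c) < 1 := by
      rw [div_mul_div_comm, div_lt_one (by positivity), ← sq, hc]
      nlinarith
    have hsum : arctan ((1 - r) / c) + arctan (r / c) < π / 2 := by
      rw [arctan_add hprod]; exact arctan_lt_pi_div_two _
    simp only [zero_div, tan_zero, zero_sub, neg_div, arctan_neg, show π / 2 / 2 = π / 4 by ring,
      tan_pi_div_four]
    calc 2 / c * arctan ((1 - r) / c) - 2 / c * -arctan (r / c)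
        = 2 / c * (arctan ((1 - r) / c) + arctan (r / c)) := by ring
      _ ≤ 2 / c * (π / 2) := by gcongr
      _ = π / c := by ring
  · rw [uIcc_of_le (by positivity)] at hθ
    exact cos_pos_of_mem_Ioo ⟨by linarith [hθ.1, pi_pos], by linarith [hθ.2, pi_pos]⟩

lemma lintegral_inv_one_sub_mul_abs_sin_le {r : ℝ} (hr : |r| < 1) :
    ∫⁻ θ in Ioo (-(π / 2)) (π / 2), ENNReal.ofReal (1 - r * |sin θ|)⁻¹ ≤
      ENNReal.ofReal (2 * π / √(1 - r ^ 2)) := by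
  set f : ℝ → ℝ := fun θ => (1 - r * |sin θ|)⁻¹
  have hpos (θ : ℝ) : 0 < 1 - r * |sin θ| := by
    nlinarith [abs_sin_le_one θ, abs_nonneg (sin θ), le_abs_self r, abs_nonneg r]
  have hcont : Continuous f :=
    (continuous_const.sub (continuous_const.mul continuous_sin.abs)).inv₀ fun θ => (hpos θ).ne'
  have hhalf : ∫ θ in (0)..(π / 2), f θ = ∫ θ in (0)..(π / 2), (1 - r * sin θ)⁻¹ := by
    refine intervalIntegral.integral_congr fun θ hθ => ?_
    rw [uIcc_of_le (by positivity)] at hθ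
    simp only [f, abs_of_nonneg (sin_nonneg_of_nonneg_of_le_pi hθ.1 (by linarith [hθ.2, pi_pos]))]
  have heven : ∫ θ in (-(π / 2))..0, f θ = ∫ θ in (0)..(π / 2), f θ := by
    simpa [f] using (intervalIntegral.integral_comp_neg (a := 0) (b := π / 2) f).symm
  rw [← ofReal_integral_eq_lintegral_ofReal (hcont.integrableOn_Icc.mono_set Ioo_subset_Icc_self)
    (.of_forall fun θ => (inv_pos.2 (hpos θ)).le), ← integral_Ioc_eq_integral_Ioo,
    ← intervalIntegral.integral_of_le (by linarith [pi_pos]),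
    ← intervalIntegral.integral_add_adjacent_intervals (hcont.intervalIntegrable _ 0)
      (hcont.intervalIntegrable 0 _), heven, hhalf]
  gcongr
  linarith [integral_inv_one_sub_mul_sin_le hr, mul_div_assoc 2 π √(1 - r ^ 2)]

lemma lintegral_Ioo_div_sqrt_one_sub_sq_eq_lintegral_comp_sin (f : ℝ → ENNReal) :
    ∫⁻ t in Ioo (-1) 1, f t / ENNReal.ofReal √(1 - t ^ 2) =
      ∫⁻ θ in Ioo (-(π / 2)) (π / 2), f (sin θ) := by
  have himage : sin '' Ioo (-(π / 2)) (π / 2) = Ioo (-1) 1 := by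
    simpa using continuous_sin.continuousOn.image_Ioo_of_strictMonoOn
      (by linarith [pi_pos]) strictMonoOn_sin
  rw [← himage, lintegral_image_eq_lintegral_abs_deriv_mul measurableSet_Ioo
    (fun θ _ => (hasDerivAt_sin θ).hasDerivWithinAt) (injOn_sin.mono Ioo_subset_Icc_self)]
  refine setLIntegral_congr_fun measurableSet_Ioo fun θ hθ => ?_
  have hcos : 0 < cos θ := cos_pos_of_mem_Ioo hθ
  rw [← cos_sq', sqrt_sq hcos.le, abs_of_pos hcos,
    ENNReal.mul_div_cancel (by simpa using hcos) ENNReal.ofReal_ne_top]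

lemma tsum_lintegral_enorm_sin_pow_mul_le {x : ℝ} (hx : |x| < 1) :
    ∑' k : ℕ, (∫⁻ θ in Ioo (-(π / 2)) (π / 2), ‖sin θ‖ₑ ^ k) * ‖x‖ₑ ^ k ≤
      ENNReal.ofReal (2 * π / √(1 - x ^ 2)) := by
  have hgeom (θ : ℝ) : ∑' k : ℕ, (‖x‖ₑ * ‖sin θ‖ₑ) ^ k = ENNReal.ofReal (1 - |x| * |sin θ|)⁻¹ := by
    have hlt : |x| * |sin θ| < 1 := by
      nlinarith [abs_sin_le_one θ, abs_nonneg (sin θ), abs_nonneg x]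
    rw [ENNReal.tsum_geometric, ENNReal.ofReal_inv_of_pos (by linarith),
      ENNReal.ofReal_sub _ (by positivity), ENNReal.ofReal_one, ENNReal.ofReal_mul (abs_nonneg x),
      ← Real.enorm_eq_ofReal_abs, ← Real.enorm_eq_ofReal_abs]
  calc ∑' k : ℕ, (∫⁻ θ in Ioo (-(π / 2)) (π / 2), ‖sin θ‖ₑ ^ k) * ‖x‖ₑ ^ k
      = ∫⁻ θ in Ioo (-(π / 2)) (π / 2), ∑' k : ℕ, (‖x‖ₑ * ‖sin θ‖ₑ) ^ k := by
        rw [lintegral_tsum fun k => by fun_prop]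
        refine tsum_congr fun k => ?_
        rw [← lintegral_mul_const' _ _ (by simp)]
        simp only [mul_pow, mul_comm]
    _ = ∫⁻ θ in Ioo (-(π / 2)) (π / 2), ENNReal.ofReal (1 - |x| * |sin θ|)⁻¹ := by
        simp only [hgeom]
    _ ≤ ENNReal.ofReal (2 * π / √(1 - x ^ 2)) := by
        simpa only [sq_abs] using lintegral_inv_one_sub_mul_abs_sin_le (r := |x|) (by rwa [abs_abs])

theorem tsum_enorm_integral_mul_conj_pow_sq_le {g : ℝ → ℂ}
    (hg : AEStronglyMeasurable g (volume.restrict (Ioo (-1 : ℝ) 1))) :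
    ∑' k : ℕ, ‖∫ t in Ioo (-1 : ℝ) 1, g t * starRingEnd ℂ ((t : ℂ) ^ k)‖ₑ ^ 2 ≤
      ENNReal.ofReal (2 * π) * ∫⁻ t in Ioo (-1 : ℝ) 1, ‖g t‖ₑ ^ 2 := by
  set w : ℝ → ENNReal := fun t => ENNReal.ofReal √(1 - t ^ 2)
  set A : ℕ → ENNReal := fun k => ∫⁻ θ in Ioo (-(π / 2)) (π / 2), ‖sin θ‖ₑ ^ k
  have hg_enorm := hg.enorm
  have hw_pos {t : ℝ} (ht : t ∈ Ioo (-1 : ℝ) 1) : w t ≠ 0 := by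
    simpa [w] using abs_lt.2 ht
  have hcoeff (k : ℕ) : ‖∫ t in Ioo (-1 : ℝ) 1, g t * starRingEnd ℂ ((t : ℂ) ^ k)‖ₑ ^ 2 ≤
      (∫⁻ t in Ioo (-1 : ℝ) 1, ‖g t‖ₑ ^ 2 * w t * ‖t‖ₑ ^ k) * A k := by
    rw [show A k = ∫⁻ t in Ioo (-1 : ℝ) 1, ‖t‖ₑ ^ k / w t from
      (lintegral_Ioo_div_sqrt_one_sub_sq_eq_lintegral_comp_sin (‖·‖ₑ ^ k)).symm]
    calc ‖∫ t in Ioo (-1 : ℝ) 1, g t * starRingEnd ℂ ((t : ℂ) ^ k)‖ₑ ^ 2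
        ≤ (∫⁻ t in Ioo (-1 : ℝ) 1, ‖g t‖ₑ * ‖t‖ₑ ^ k) ^ 2 := by
          gcongr
          refine (enorm_integral_le_lintegral_enorm _).trans_eq ?_
          simp [← ofReal_norm]
      _ ≤ _ := by
          refine lintegral_sq_le_mul_of_sq_le (by fun_prop) (by fun_prop)
            (ae_restrict_of_forall_mem measurableSet_Ioo fun t ht => le_of_eq ?_)
          rw [div_eq_mul_inv]
          calc (‖g t‖ₑ * ‖t‖ₑ ^ k) ^ 2
              = ‖g t‖ₑ ^ 2 * ‖t‖ₑ ^ k * ‖t‖ₑ ^ k * (w t * (w t)⁻¹) := by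
                rw [ENNReal.mul_inv_cancel (hw_pos ht) ENNReal.ofReal_ne_top]; ring
            _ = _ := by ring
  calc ∑' k : ℕ, ‖∫ t in Ioo (-1 : ℝ) 1, g t * starRingEnd ℂ ((t : ℂ) ^ k)‖ₑ ^ 2
      ≤ ∑' k : ℕ, (∫⁻ t in Ioo (-1 : ℝ) 1, ‖g t‖ₑ ^ 2 * w t * ‖t‖ₑ ^ k) * A k :=
        ENNReal.tsum_le_tsum hcoeff
    _ = ∫⁻ t in Ioo (-1 : ℝ) 1, ∑' k : ℕ, ‖g t‖ₑ ^ 2 * w t * ‖t‖ₑ ^ k * A k := by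
        rw [lintegral_tsum fun k => by fun_prop]
        exact tsum_congr fun k => (lintegral_mul_const'' _ (by fun_prop)).symm
    _ = ∫⁻ t in Ioo (-1 : ℝ) 1, ‖g t‖ₑ ^ 2 * w t * ∑' k : ℕ, A k * ‖t‖ₑ ^ k := by
        simp only [← ENNReal.tsum_mul_left, mul_assoc, mul_comm (A _)]
    _ ≤ ∫⁻ t in Ioo (-1 : ℝ) 1, ‖g t‖ₑ ^ 2 * ENNReal.ofReal (2 * π) := by
        refine setLIntegral_mono' measurableSet_Ioo fun t ht => ?_
        calc ‖g t‖ₑ ^ 2 * w t * ∑' k : ℕ, A k * ‖t‖ₑ ^ k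
            ≤ ‖g t‖ₑ ^ 2 * w t * ENNReal.ofReal (2 * π / √(1 - t ^ 2)) := by
              gcongr; exact tsum_lintegral_enorm_sin_pow_mul_le (abs_lt.2 ht)
          _ = ‖g t‖ₑ ^ 2 * ENNReal.ofReal (2 * π) := by
              rw [mul_assoc, ENNReal.ofReal_div_of_pos (by simpa using abs_lt.2 ht),
                ENNReal.mul_div_cancel (hw_pos ht) ENNReal.ofReal_ne_top]
    _ = ENNReal.ofReal (2 * π) * ∫⁻ t in Ioo (-1 : ℝ) 1, ‖g t‖ₑ ^ 2 := by
        rw [lintegral_mul_const'' _ (by fun_prop), mul_comm]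

theorem stmt_9 :
    ∀ g : ℝ → ℂ, MemLp g 2 (volume.restrict (Set.Ioo (-1 : ℝ) 1)) → ∀ F : Finset ℕ,
      ∑ k ∈ F, ‖∫ t in Set.Ioo (-1 : ℝ) 1, g t * (starRingEnd ℂ) ((t : ℂ) ^ k)‖ ^ 2 ≤
        2 * π * ∫ t in Set.Ioo (-1 : ℝ) 1, ‖g t‖ ^ 2 := by
  intro g hg F
  have hint : Integrable (fun t => ‖g t‖ ^ 2) (volume.restrict (Ioo (-1 : ℝ) 1)) :=
    hg.integrable_norm_pow two_ne_zero
  rw [← ENNReal.ofReal_le_ofReal_iff (by positivity), ENNReal.ofReal_mul (by positivity),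
    ofReal_integral_eq_lintegral_ofReal hint (.of_forall fun t => by positivity),
    ENNReal.ofReal_sum_of_nonneg fun k _ => by positivity]
  simp only [ENNReal.ofReal_pow (norm_nonneg _), ofReal_norm]
  exact (ENNReal.sum_le_tsum F).trans (tsum_enorm_integral_mul_conj_pow_sq_le hg.1)
end

section
/- Let A be a bounded normal operator on a complex Hilbert space H (i.e., A*A = AA*), let x ∈ H, and let C > 0. Then the sequence (A^k x)_{k∈ℕ} is a Bessel sequence in H with bound C if and only if the sequence ((A*)^k x)_{k∈ℕ} is a Bessel sequence in H with bound C, where A* denotes the adjoint of A. -/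
/-!
Both Bessel conditions are bounds on synthesis operators: since `‖T‖ = ‖T†‖`, the bound `C`
for `(y_j)_{j ∈ F}` is equivalent to `‖∑ c_j y_j‖² ≤ C ∑ |c_j|²`. The operator
`P = ∑ conj c_j • A^j` is a polynomial in the normal operator `A`, hence normal, so
`‖∑ c_j (A†)^j x‖ = ‖P† x‖ = ‖P x‖ = ‖∑ conj c_j A^j x‖`, and conjugating `c` preserves its
`ℓ²` norm.
-/

open MeasureTheory ContinuousLinearMap

open scoped InnerProductSpace ComplexConjugate

section

variable {𝕜 E F : Type*} [RCLike 𝕜]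

theorem ContinuousLinearMap.forall_norm_sq_apply_le_iff [NormedAddCommGroup E] [NormedSpace 𝕜 E]
    [NormedAddCommGroup F] [NormedSpace 𝕜 F] (T : E →L[𝕜] F) {C : ℝ} (hC : 0 ≤ C) :
    (∀ e, ‖T e‖ ^ 2 ≤ C * ‖e‖ ^ 2) ↔ ‖T‖ ≤ √C := by
  rw [opNorm_le_iff (Real.sqrt_nonneg C)]
  refine forall_congr' fun e => ?_
  rw [← sq_le_sq₀ (norm_nonneg _) (by positivity), mul_pow, Real.sq_sqrt hC]

theorem ContinuousLinearMap.forall_norm_sq_apply_le_iff_adjoint [NormedAddCommGroup E]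
    [InnerProductSpace 𝕜 E] [CompleteSpace E] [NormedAddCommGroup F] [InnerProductSpace 𝕜 F]
    [CompleteSpace F] (T : E →L[𝕜] F) {C : ℝ} (hC : 0 ≤ C) :
    (∀ e, ‖T e‖ ^ 2 ≤ C * ‖e‖ ^ 2) ↔ ∀ f, ‖adjoint T f‖ ^ 2 ≤ C * ‖f‖ ^ 2 := by
  rw [forall_norm_sq_apply_le_iff _ hC, forall_norm_sq_apply_le_iff _ hC,
    LinearIsometryEquiv.norm_map]

variable {ι : Type*} [Fintype ι]

def synthesisOperator [NormedAddCommGroup E] [NormedSpace 𝕜 E] (y : ι → E) :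
    EuclideanSpace 𝕜 ι →L[𝕜] E :=
  ∑ i, (EuclideanSpace.proj i).smulRight (y i)

theorem synthesisOperator_apply [NormedAddCommGroup E] [NormedSpace 𝕜 E] (y : ι → E)
    (c : EuclideanSpace 𝕜 ι) : synthesisOperator y c = ∑ i, c i • y i := by
  simp [synthesisOperator]

variable [NormedAddCommGroup E] [InnerProductSpace 𝕜 E] [CompleteSpace E]

theorem adjoint_synthesisOperator_apply (y : ι → E) (v : E) (i : ι) :
    (adjoint (synthesisOperator y) v : EuclideanSpace 𝕜 ι) i = ⟪y i, v⟫_𝕜 := by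
  classical
  have : synthesisOperator y (EuclideanSpace.single i (1 : 𝕜)) = y i := by
    simp [synthesisOperator_apply, PiLp.single_apply]
  rw [← this, ← adjoint_inner_right, EuclideanSpace.inner_single_left, map_one, one_mul]

theorem norm_sq_adjoint_synthesisOperator_apply (y : ι → E) (v : E) :
    ‖(adjoint (synthesisOperator y) v : EuclideanSpace 𝕜 ι)‖ ^ 2 = ∑ i, ‖⟪v, y i⟫_𝕜‖ ^ 2 := by
  simp [EuclideanSpace.norm_sq_eq, adjoint_synthesisOperator_apply, norm_inner_symm]

end

-- `StarAlgebra.adjoin R {a}` is commutative when `a` is normal.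
lemma IsStarNormal.of_mem_adjoin_singleton {R A : Type*} [CommSemiring R] [StarRing R]
    [Semiring A] [Algebra R A] [StarRing A] [StarModule R A] {a b : A} [IsStarNormal a]
    (hb : b ∈ StarAlgebra.adjoin R {a}) : IsStarNormal b :=
  ⟨setLike_mul_comm (star_mem hb) hb⟩

section

variable {H : Type*} [NormedAddCommGroup H] [InnerProductSpace ℂ H] [CompleteSpace H]

theorem isBesselSequenceWith_iff_norm_sq_sum_smul_le {ι : Type*} (y : ι → H) {C : ℝ}
    (hC : 0 ≤ C) :
    IsBesselSequenceWith y C ↔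
      ∀ F : Finset ι, ∀ c : EuclideanSpace ℂ F, ‖∑ j, c j • y j‖ ^ 2 ≤ C * ‖c‖ ^ 2 := by
  rw [IsBesselSequenceWith, forall_comm]
  refine forall_congr' fun F => ?_
  have := forall_norm_sq_apply_le_iff_adjoint (synthesisOperator (𝕜 := ℂ) fun j : F => y j) hC
  simp only [synthesisOperator_apply, norm_sq_adjoint_synthesisOperator_apply] at this
  exact (forall_congr' fun v => by rw [← F.sum_coe_sort]).trans this.symm

theorem norm_sum_smul_adjoint_pow_apply (A : H →L[ℂ] H) [IsStarNormal A] {ι : Type*}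
    [Fintype ι] (n : ι → ℕ) (c : ι → ℂ) (x : H) :
    ‖∑ i, c i • (adjoint A ^ n i) x‖ = ‖∑ i, conj (c i) • (A ^ n i) x‖ := by
  set P := ∑ i, conj (c i) • A ^ n i
  have hA : A ∈ StarAlgebra.adjoin ℂ {A} := StarAlgebra.self_mem_adjoin_singleton ℂ A
  have : IsStarNormal P := .of_mem_adjoin_singleton <|
    sum_mem fun i _ => Subalgebra.smul_mem _ (pow_mem hA _) _
  have hP : adjoint P = ∑ i, c i • adjoint A ^ n i := by
    simp [P, ← star_eq_adjoint, star_smul, star_pow]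
  calc ‖∑ i, c i • (adjoint A ^ n i) x‖ = ‖adjoint P x‖ := by simp [hP]
    _ = ‖P x‖ := (isStarNormal_iff_norm_eq_adjoint.mp this x).symm
    _ = ‖∑ i, conj (c i) • (A ^ n i) x‖ := by simp [P]

theorem IsBesselSequenceWith.adjoint_pow_apply {A : H →L[ℂ] H} [IsStarNormal A] {x : H} {C : ℝ}
    (hC : 0 ≤ C) (h : IsBesselSequenceWith (fun k : ℕ => (A ^ k) x) C) :
    IsBesselSequenceWith (fun k : ℕ => (adjoint A ^ k) x) C := by
  rw [isBesselSequenceWith_iff_norm_sq_sum_smul_le _ hC] at h ⊢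
  intro F c
  let c' : EuclideanSpace ℂ F := WithLp.toLp 2 (fun j => conj (c j) : F → ℂ)
  have hc : ‖c'‖ = ‖c‖ := by simp [c', EuclideanSpace.norm_eq]
  rw [norm_sum_smul_adjoint_pow_apply A (fun j : F => (j : ℕ)), ← hc]
  exact h F c'

end

theorem stmt_10 {H : Type*} [NormedAddCommGroup H] [InnerProductSpace ℂ H] [CompleteSpace H]
    (A : H →L[ℂ] H)
    (hA : ContinuousLinearMap.adjoint A ∘L A = A ∘L ContinuousLinearMap.adjoint A)
    (x : H) (C : ℝ) (hC : 0 < C) :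
    IsBesselSequenceWith (fun k : ℕ => (A ^ k) x) C ↔
      IsBesselSequenceWith (fun k : ℕ => ((ContinuousLinearMap.adjoint A) ^ k) x) C := by
  have : IsStarNormal A := ⟨by rw [star_eq_adjoint]; exact hA⟩
  have : IsStarNormal (adjoint A) := star_eq_adjoint A ▸ inferInstance
  exact ⟨.adjoint_pow_apply hC.le, fun h => by simpa using h.adjoint_pow_apply hC.le⟩
end

section
/- Let μ be a finite positive Borel measure on ℂ concentrated on the open unit disc 𝔻 = {z ∈ ℂ : |z| < 1} (i.e., μ(ℂ∖𝔻) = 0). Then the following are equivalent: (a) there exists C₁ > 0 such that μ(𝔻 ∩ B_r(z)) ≤ C₁·r for every r > 0 and every z ∈ ℂ with |z| = 1, where B_r(z) = {w ∈ ℂ : |w − z| < r}; (b) sup_{z∈𝔻} ∫_𝔻 (1 − |z|²)/|1 − conj(z)·w|² dμ(w) < ∞. -/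
/-!
Write `z = ρζ` with `‖ζ‖ = 1`. For `‖w‖ ≤ 1` we have `‖1 - conj z * w‖ = ‖ζ - ρw‖`, and this is
comparable to `(1 - ρ) + ‖w - ζ‖`, so the kernel is comparable to `(1 - ρ) / ((1 - ρ) + ‖w - ζ‖)²`.
For (b) ⇒ (a), take `ρ = 1 - r`: the kernel is at least `1 / (4r)` on `B_r(ζ)` (for `r ≥ 1`, take
`z = 0`, where the kernel is `1`). For (a) ⇒ (b), cover the disc by the balls `B(ζ, 2ᵏ(1 - ρ))`:
the kernel is `O(4⁻ᵏ / (1 - ρ))` outside the `k`-th ball and the `(k+1)`-st has measure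
`O(2ᵏ(1 - ρ))`, so the integral is a geometric series.
-/

open MeasureTheory
open scoped ENNReal
open Metric

section Dyadic

variable {X : Type*} [PseudoMetricSpace X] [MeasurableSpace X] [OpensMeasurableSpace X]

theorem lintegral_ofReal_div_add_dist_sq_le (ν : Measure X) (x : X) {C δ : ℝ} (hC : 0 ≤ C)
    (hδ : 0 < δ) (hball : ∀ r > 0, ν (ball x r) ≤ ENNReal.ofReal (C * r)) :
    ∫⁻ y, ENNReal.ofReal (δ / (δ + dist y x) ^ 2) ∂ν ≤ ENNReal.ofReal (8 * C) := by
  set r : ℕ → ℝ := fun k ↦ 2 ^ k * δ with hr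
  have hr_pos : ∀ k, 0 < r k := fun k ↦ by positivity
  have hdom : ∀ y, ENNReal.ofReal (δ / (δ + dist y x) ^ 2) ≤
      ∑' k, (ball x (r k)).indicator (fun _ ↦ ENNReal.ofReal (4 * δ / r k ^ 2)) y := by
    intro y
    have hd := dist_nonneg (x := y) (y := x)
    obtain ⟨n, hn, hn'⟩ := exists_nat_pow_near (x := (δ + dist y x) / δ)
      ((one_le_div hδ).2 (by linarith)) one_lt_two
    rw [le_div_iff₀ hδ] at hn
    rw [div_lt_iff₀ hδ] at hn'
    have hy : y ∈ ball x (r (n + 1)) := by rw [mem_ball]; linarith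
    refine le_trans ?_ (ENNReal.le_tsum (n + 1))
    rw [Set.indicator_of_mem hy]
    refine ENNReal.ofReal_le_ofReal ?_
    have hsq : r (n + 1) ^ 2 ≤ 4 * (δ + dist y x) ^ 2 := by
      simp only [hr, pow_succ]; nlinarith [hr_pos n]
    rw [div_le_div_iff₀ (by positivity) (pow_pos (hr_pos _) 2)]
    calc δ * r (n + 1) ^ 2 ≤ δ * (4 * (δ + dist y x) ^ 2) := by gcongr
      _ = 4 * δ * (δ + dist y x) ^ 2 := by ring
  calc ∫⁻ y, ENNReal.ofReal (δ / (δ + dist y x) ^ 2) ∂ν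
      ≤ ∫⁻ y, ∑' k, (ball x (r k)).indicator (fun _ ↦ ENNReal.ofReal (4 * δ / r k ^ 2)) y ∂ν :=
        lintegral_mono hdom
    _ = ∑' k, ∫⁻ y, (ball x (r k)).indicator (fun _ ↦ ENNReal.ofReal (4 * δ / r k ^ 2)) y ∂ν :=
        lintegral_tsum fun k ↦ (measurable_const.indicator measurableSet_ball).aemeasurable
    _ ≤ ∑' k, ENNReal.ofReal (4 * δ / r k ^ 2) * ENNReal.ofReal (C * r k) :=
        ENNReal.tsum_le_tsum fun k ↦ (lintegral_indicator_const_le _ _).trans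
          (by gcongr; exact hball _ (hr_pos k))
    _ = ∑' k : ℕ, ENNReal.ofReal (8 * C / 2 / 2 ^ k) := by
        congr 1 with k
        rw [← ENNReal.ofReal_mul (by positivity)]
        congr 1
        simp only [hr]
        field_simp
        ring
    _ = ENNReal.ofReal (8 * C) := by
        rw [← ENNReal.ofReal_tsum_of_nonneg (fun k ↦ by positivity) (summable_geometric_two' _),
          tsum_geometric_two']

end Dyadic

section UnitSphere

variable {E : Type*} [NormedAddCommGroup E] [NormedSpace ℝ E] {ζ w : E} {ρ : ℝ}

theorem norm_sub_smul_le_one_sub_add_dist (hρ1 : ρ ≤ 1) (hw : ‖w‖ ≤ 1) :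
    ‖ζ - ρ • w‖ ≤ (1 - ρ) + dist w ζ := by
  have hsplit : ζ - ρ • w = (1 - ρ) • w - (w - ζ) := by rw [sub_smul, one_smul]; abel
  calc ‖ζ - ρ • w‖ ≤ ‖(1 - ρ) • w‖ + ‖w - ζ‖ := hsplit ▸ norm_sub_le _ _
    _ ≤ (1 - ρ) + dist w ζ := by
        rw [norm_smul, Real.norm_of_nonneg (by linarith), dist_eq_norm]
        gcongr
        nlinarith

theorem one_sub_add_dist_le_three_mul_norm_sub_smul (hζ : ‖ζ‖ = 1) (hρ0 : 0 ≤ ρ) (hρ1 : ρ ≤ 1)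
    (hw : ‖w‖ ≤ 1) : (1 - ρ) + dist w ζ ≤ 3 * ‖ζ - ρ • w‖ := by
  have hradial : 1 - ρ ≤ ‖ζ - ρ • w‖ := by
    calc 1 - ρ ≤ ‖ζ‖ - ‖ρ • w‖ := by
          rw [hζ, norm_smul, Real.norm_of_nonneg hρ0]; nlinarith
      _ ≤ ‖ζ - ρ • w‖ := norm_sub_norm_le _ _
  have htangential : dist w ζ ≤ ‖ζ - ρ • w‖ + (1 - ρ) := by
    calc dist w ζ = ‖(1 - ρ) • w - (ζ - ρ • w)‖ := by
          rw [dist_eq_norm, sub_smul, one_smul]; congr 1; abel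
      _ ≤ ‖(1 - ρ) • w‖ + ‖ζ - ρ • w‖ := norm_sub_le _ _
      _ ≤ ‖ζ - ρ • w‖ + (1 - ρ) := by
        rw [norm_smul, Real.norm_of_nonneg (by linarith)]; nlinarith
  linarith

end UnitSphere

section Kernel

open ComplexConjugate

noncomputable def diskKernel (z w : ℂ) : ℝ := (1 - ‖z‖ ^ 2) / ‖1 - conj z * w‖ ^ 2

variable {ζ w : ℂ} {ρ : ℝ}

theorem norm_ofReal_mul_of_norm_eq_one (hζ : ‖ζ‖ = 1) (hρ : 0 ≤ ρ) : ‖(ρ : ℂ) * ζ‖ = ρ := by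
  rw [norm_mul, hζ, mul_one, Complex.norm_of_nonneg hρ]

theorem norm_one_sub_conj_ofReal_mul_mul (hζ : ‖ζ‖ = 1) (ρ : ℝ) (w : ℂ) :
    ‖1 - conj ((ρ : ℂ) * ζ) * w‖ = ‖ζ - ρ • w‖ := by
  have hconj : conj ζ * ζ = 1 := by rw [Complex.conj_mul', hζ]; simp
  calc ‖1 - conj ((ρ : ℂ) * ζ) * w‖ = ‖conj ζ * (ζ - ρ • w)‖ := by
        rw [Complex.real_smul, mul_sub, hconj, map_mul, Complex.conj_ofReal]; ring_nf
    _ = ‖ζ - ρ • w‖ := by rw [norm_mul, Complex.norm_conj, hζ, one_mul]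

theorem diskKernel_ofReal_mul_eq (hζ : ‖ζ‖ = 1) (hρ : 0 ≤ ρ) (w : ℂ) :
    diskKernel ((ρ : ℂ) * ζ) w = (1 - ρ ^ 2) / ‖ζ - ρ • w‖ ^ 2 := by
  rw [diskKernel, norm_ofReal_mul_of_norm_eq_one hζ hρ, norm_one_sub_conj_ofReal_mul_mul hζ]

theorem diskKernel_ofReal_mul_le (hζ : ‖ζ‖ = 1) (hρ0 : 0 ≤ ρ) (hρ1 : ρ < 1) (hw : ‖w‖ ≤ 1) :
    diskKernel ((ρ : ℂ) * ζ) w ≤ 18 * ((1 - ρ) / ((1 - ρ) + dist w ζ) ^ 2) := by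
  have hlow := one_sub_add_dist_le_three_mul_norm_sub_smul hζ hρ0 hρ1.le hw
  rw [diskKernel_ofReal_mul_eq hζ hρ0]
  calc (1 - ρ ^ 2) / ‖ζ - ρ • w‖ ^ 2 ≤ (2 * (1 - ρ)) / (((1 - ρ) + dist w ζ) / 3) ^ 2 := by
        gcongr
        · nlinarith
        · linarith
    _ = 18 * ((1 - ρ) / ((1 - ρ) + dist w ζ) ^ 2) := by field_simp; ring

theorem inv_four_mul_le_diskKernel (hζ : ‖ζ‖ = 1) {r : ℝ} (hr0 : 0 < r) (hr1 : r ≤ 1)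
    (hw : ‖w‖ ≤ 1) (hwζ : dist w ζ < r) : 1 / (4 * r) ≤ diskKernel (((1 - r : ℝ) : ℂ) * ζ) w := by
  have hρ0 : 0 ≤ 1 - r := by linarith
  have hlow := one_sub_add_dist_le_three_mul_norm_sub_smul hζ hρ0 (by linarith) hw
  have hup := norm_sub_smul_le_one_sub_add_dist (ζ := ζ) (ρ := 1 - r) (by linarith) hw
  have hpos : 0 < ‖ζ - (1 - r) • w‖ := by linarith [dist_nonneg (x := w) (y := ζ)]
  rw [diskKernel_ofReal_mul_eq hζ hρ0]
  calc 1 / (4 * r) = r / (2 * r) ^ 2 := by field_simp; ring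
    _ ≤ (1 - (1 - r) ^ 2) / ‖ζ - (1 - r) • w‖ ^ 2 := by
        gcongr
        · nlinarith
        · nlinarith [mul_nonneg hr0.le hρ0]
        · linarith

end Kernel

theorem lintegral_diskKernel_le_of_measure_inter_ball_le (μ : Measure ℂ) {C : ℝ} (hC : 0 < C)
    (ha : ∀ r > 0, ∀ ζ : ℂ, ‖ζ‖ = 1 → μ ({w : ℂ | ‖w‖ < 1} ∩ ball ζ r) ≤ ENNReal.ofReal (C * r))
    {z : ℂ} (hz : ‖z‖ < 1) :
    ∫⁻ w in {w : ℂ | ‖w‖ < 1}, ENNReal.ofReal (diskKernel z w) ∂μ ≤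
      18 * ENNReal.ofReal (8 * C) := by
  set D := {w : ℂ | ‖w‖ < 1}
  obtain ⟨ρ, ζ, hρ, hζ, rfl⟩ : ∃ ρ : ℝ, ∃ ζ : ℂ, 0 ≤ ρ ∧ ‖ζ‖ = 1 ∧ z = ρ * ζ :=
    ⟨‖z‖, _, norm_nonneg z, Complex.norm_exp_ofReal_mul_I _, (Complex.norm_mul_exp_arg_mul_I z).symm⟩
  rw [norm_ofReal_mul_of_norm_eq_one hζ hρ] at hz
  have hball : ∀ r > 0, μ.restrict D (ball ζ r) ≤ ENNReal.ofReal (C * r) := fun r hr ↦ by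
    rw [Measure.restrict_apply measurableSet_ball, Set.inter_comm]
    exact ha r hr ζ hζ
  calc ∫⁻ w in D, ENNReal.ofReal (diskKernel ((ρ : ℂ) * ζ) w) ∂μ
      ≤ ∫⁻ w in D, 18 * ENNReal.ofReal ((1 - ρ) / ((1 - ρ) + dist w ζ) ^ 2) ∂μ :=
        setLIntegral_mono' (measurableSet_lt measurable_norm measurable_const) fun w hw ↦ by
          rw [← ENNReal.ofReal_ofNat, ← ENNReal.ofReal_mul (by norm_num)]
          exact ENNReal.ofReal_le_ofReal (diskKernel_ofReal_mul_le hζ hρ hz (le_of_lt hw))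
    _ = 18 * ∫⁻ w in D, ENNReal.ofReal ((1 - ρ) / ((1 - ρ) + dist w ζ) ^ 2) ∂μ :=
        lintegral_const_mul' _ _ (by simp)
    _ ≤ 18 * ENNReal.ofReal (8 * C) := by
        gcongr
        exact lintegral_ofReal_div_add_dist_sq_le _ ζ hC.le (by linarith) hball

theorem measure_inter_ball_le_of_lintegral_diskKernel_le (μ : Measure ℂ) {M : ℝ≥0∞}
    (hb : ∀ z : ℂ, ‖z‖ < 1 → ∫⁻ w in {w : ℂ | ‖w‖ < 1}, ENNReal.ofReal (diskKernel z w) ∂μ ≤ M)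
    {ζ : ℂ} (hζ : ‖ζ‖ = 1) {r : ℝ} (hr : 0 < r) :
    μ ({w : ℂ | ‖w‖ < 1} ∩ ball ζ r) ≤ ENNReal.ofReal (4 * r) * M := by
  set D := {w : ℂ | ‖w‖ < 1}
  rcases le_or_gt 1 r with hr1 | hr1
  · have hμD : μ D ≤ M := by simpa [diskKernel] using hb 0 (by simp)
    calc μ (D ∩ ball ζ r) ≤ M := (measure_mono Set.inter_subset_left).trans hμD
      _ ≤ ENNReal.ofReal (4 * r) * M :=
        le_mul_of_one_le_left' (ENNReal.one_le_ofReal.2 (by linarith))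
  · set S := D ∩ ball ζ r
    have hS : MeasurableSet S :=
      (measurableSet_lt measurable_norm measurable_const).inter measurableSet_ball
    set z : ℂ := ((1 - r : ℝ) : ℂ) * ζ
    have hz : ‖z‖ < 1 := by rw [norm_ofReal_mul_of_norm_eq_one hζ (by linarith)]; linarith
    have hkey : ENNReal.ofReal (1 / (4 * r)) * μ S ≤ M :=
      calc ENNReal.ofReal (1 / (4 * r)) * μ S
          = ∫⁻ _ in S, ENNReal.ofReal (1 / (4 * r)) ∂μ := (setLIntegral_const S _).symm
        _ ≤ ∫⁻ w in S, ENNReal.ofReal (diskKernel z w) ∂μ :=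
          setLIntegral_mono' hS fun w hw ↦ ENNReal.ofReal_le_ofReal
            (inv_four_mul_le_diskKernel hζ hr hr1.le (le_of_lt hw.1) hw.2)
        _ ≤ ∫⁻ w in D, ENNReal.ofReal (diskKernel z w) ∂μ :=
          lintegral_mono_set Set.inter_subset_left
        _ ≤ M := hb z hz
    calc μ S = ENNReal.ofReal (4 * r) * (ENNReal.ofReal (1 / (4 * r)) * μ S) := by
          rw [← mul_assoc, ← ENNReal.ofReal_mul (by positivity), mul_one_div_cancel (by positivity),
            ENNReal.ofReal_one, one_mul]
      _ ≤ ENNReal.ofReal (4 * r) * M := by gcongr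

theorem stmt_13_general (μ : Measure ℂ) :
    (∃ C₁ > 0, ∀ r > (0 : ℝ), ∀ z : ℂ, ‖z‖ = 1 →
        μ ({w : ℂ | ‖w‖ < 1} ∩ Metric.ball z r) ≤ ENNReal.ofReal (C₁ * r)) ↔
      (∃ M : ℝ≥0∞, M < ⊤ ∧ ∀ z : ℂ, ‖z‖ < 1 →
        ∫⁻ w in {w : ℂ | ‖w‖ < 1},
          ENNReal.ofReal ((1 - ‖z‖ ^ 2) /
            ‖1 - (starRingEnd ℂ) z * w‖ ^ 2) ∂μ ≤ M) := by
  constructor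
  · rintro ⟨C₁, hC₁, ha⟩
    exact ⟨18 * ENNReal.ofReal (8 * C₁), by finiteness,
      fun z hz ↦ lintegral_diskKernel_le_of_measure_inter_ball_le μ hC₁ ha hz⟩
  · rintro ⟨M, hM, hb⟩
    refine ⟨4 * M.toReal + 1, by positivity, fun r hr ζ hζ ↦ ?_⟩
    calc μ ({w : ℂ | ‖w‖ < 1} ∩ ball ζ r) ≤ ENNReal.ofReal (4 * r) * M :=
          measure_inter_ball_le_of_lintegral_diskKernel_le μ hb hζ hr
      _ = ENNReal.ofReal (4 * r * M.toReal) := by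
          rw [ENNReal.ofReal_mul' ENNReal.toReal_nonneg, ENNReal.ofReal_toReal hM.ne]
      _ ≤ ENNReal.ofReal ((4 * M.toReal + 1) * r) := ENNReal.ofReal_le_ofReal (by nlinarith)

theorem stmt_13 (μ : Measure ℂ) [IsFiniteMeasure μ]
    (hμ : μ {z : ℂ | 1 ≤ ‖z‖} = 0) :
    (∃ C₁ > 0, ∀ r > (0 : ℝ), ∀ z : ℂ, ‖z‖ = 1 →
        μ ({w : ℂ | ‖w‖ < 1} ∩ Metric.ball z r) ≤ ENNReal.ofReal (C₁ * r)) ↔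
      (∃ M : ℝ≥0∞, M < ⊤ ∧ ∀ z : ℂ, ‖z‖ < 1 →
        ∫⁻ w in {w : ℂ | ‖w‖ < 1},
          ENNReal.ofReal ((1 - ‖z‖ ^ 2) /
            ‖1 - (starRingEnd ℂ) z * w‖ ^ 2) ∂μ ≤ M) :=
  stmt_13_general μ
end

section
/- Let A be a bounded normal operator on a complex Hilbert space H (i.e., A*A = AA*), let (x_i)_{i∈I} be a family of vectors in H, and suppose that the family (A^k x_i)_{i∈I, k∈ℕ} is a Bessel sequence in H and that its closed linear span equals H. Then the spectrum of A is contained in the closed unit disc {z ∈ ℂ : |z| ≤ 1}. -/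
/-!
Suppose `λ ∈ σ(A)` with `1 < |λ|`, pick `1 < r < |λ|` and a continuous `f` vanishing on the disc
of radius `r` with `f λ = 1`. For every `k`, the function `z ↦ z̄⁻ᵏ f(z)` is continuous with sup
norm at most `r⁻ᵏ`, so the functional calculus factors `P = f(A)` as `P = (A*)ᵏ Bₖ` with
`‖Bₖ‖ ≤ r⁻ᵏ`. Hence `⟪P u, Aᵐ xᵢ⟫ = ⟪Bₖ u, Aᵏ⁺ᵐ xᵢ⟫`, which the Bessel bound makes `O(r⁻ᵏ)`,
so it vanishes. By completeness `P = 0`, contradicting `1 = f(λ) ∈ σ(P)`.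
-/

open ContinuousLinearMap

theorem Complex.exists_continuous_eqOn_closedBall_zero {r : ℝ} {w : ℂ} (hw : r < ‖w‖) :
    ∃ f : ℂ → ℂ, Continuous f ∧ Set.EqOn f 0 (Metric.closedBall 0 r) ∧ f w = 1 ∧
      ∀ z, ‖f z‖ ≤ 1 := by
  have hdisj : Disjoint (Metric.closedBall (0 : ℂ) r) {w} :=
    Set.disjoint_singleton_right.2 (by simpa using hw)
  obtain ⟨g, hg0, hg1, hg⟩ :=
    exists_continuous_zero_one_of_isClosed Metric.isClosed_closedBall isClosed_singleton hdisj
  refine ⟨fun z => (g z : ℂ), by fun_prop, fun z hz => by simp [hg0 hz],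
    by simp [hg1 rfl], fun z => ?_⟩
  rw [Complex.norm_real, Real.norm_of_nonneg (hg z).1]
  exact (hg z).2

section CStarAlgebra

variable {𝒜 : Type*} [CStarAlgebra 𝒜] {a : 𝒜} [IsStarNormal a]

theorem exists_cfc_eq_star_pow_mul {f : ℂ → ℂ} (hf : Continuous f) {r : ℝ} (hr : 0 < r)
    (hf0 : Set.EqOn f 0 (Metric.closedBall 0 r)) (hf1 : ∀ z, ‖f z‖ ≤ 1) (k : ℕ) :
    ∃ b : 𝒜, ‖b‖ ≤ r⁻¹ ^ k ∧ cfc f a = star a ^ k * b := by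
  set q : ℂ → ℂ := fun z => (star z)⁻¹ ^ k * f z
  have hq : Continuous q := by
    refine continuous_iff_continuousAt.2 fun z => ?_
    by_cases hz : z = 0
    · subst hz
      refine Filter.EventuallyEq.continuousAt (y := 0) ?_
      filter_upwards [Metric.closedBall_mem_nhds (0 : ℂ) hr] with w hw
      simp [q, hf0 hw]
    · exact (((continuous_star.continuousAt).inv₀ (star_ne_zero.2 hz)).pow k).mul
        hf.continuousAt
  refine ⟨cfc q a, norm_cfc_le (by positivity) fun z _ => ?_, ?_⟩
  · by_cases hz : ‖z‖ ≤ r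
    · simp only [q, hf0 (mem_closedBall_zero_iff.2 hz), Pi.zero_apply, mul_zero, norm_zero]
      positivity
    · calc ‖q z‖ = ‖z‖⁻¹ ^ k * ‖f z‖ := by simp [q]
        _ ≤ r⁻¹ ^ k * 1 := by
          gcongr
          · exact (not_le.1 hz).le
          · exact hf1 z
        _ = r⁻¹ ^ k := mul_one _
  · have hfq : f = fun z => (star z) ^ k * q z := by
      funext z
      by_cases hz : z = 0
      · simp [q, hz, hf0 (Metric.mem_closedBall_self hr.le)]
      · simp [q, hz]
    rw [hfq, cfc_mul _ _ a (by fun_prop) hq.continuousOn, cfc_pow _ k a, cfc_star_id a]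

end CStarAlgebra

section Hilbert

variable {H : Type*} [NormedAddCommGroup H] [InnerProductSpace ℂ H]

theorem eq_zero_of_forall_inner_eq_zero_of_dense_span {J : Type*} {y : J → H}
    (hy : (Submodule.span ℂ (Set.range y)).topologicalClosure = ⊤) {v : H}
    (hv : ∀ j, inner ℂ v (y j) = 0) : v = 0 := by
  have hle : Submodule.span ℂ (Set.range y) ≤ LinearMap.ker (innerₛₗ ℂ v) :=
    Submodule.span_le.2 (Set.range_subset_iff.2 hv)
  exact (Submodule.dense_iff_topologicalClosure_eq_top.2 hy).eq_zero_of_inner_left (𝕜 := ℂ)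
    fun u hu => hle hu

theorem inner_eq_zero_of_forall_eq_star_pow_mul [CompleteSpace H] {A P : H →L[ℂ] H} {y : H}
    {C r : ℝ} (hC : 0 ≤ C) (hr : 1 < r)
    (hy : ∀ n v, ‖(inner ℂ v ((A ^ n) y) : ℂ)‖ ^ 2 ≤ C * ‖v‖ ^ 2)
    (hP : ∀ k, ∃ B : H →L[ℂ] H, ‖B‖ ≤ r⁻¹ ^ k ∧ P = star A ^ k * B) (u : H) :
    inner ℂ (P u) y = 0 := by
  have hbound : ∀ k : ℕ, ‖(inner ℂ (P u) y : ℂ)‖ ^ 2 ≤ C * ‖u‖ ^ 2 * (r⁻¹ ^ 2) ^ k := by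
    intro k
    obtain ⟨B, hB, rfl⟩ := hP k
    have hBu : ‖B u‖ ≤ r⁻¹ ^ k * ‖u‖ := B.le_of_opNorm_le hB u
    calc ‖(inner ℂ ((star A ^ k * B) u) y : ℂ)‖ ^ 2
        = ‖(inner ℂ (B u) ((A ^ k) y) : ℂ)‖ ^ 2 := by
          rw [mul_apply_eq_comp, ← star_pow, star_eq_adjoint, adjoint_inner_left]
      _ ≤ C * ‖B u‖ ^ 2 := hy k (B u)
      _ ≤ C * (r⁻¹ ^ k * ‖u‖) ^ 2 := by gcongr
      _ = C * ‖u‖ ^ 2 * (r⁻¹ ^ 2) ^ k := by ring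
  have hlim : Filter.Tendsto (fun k : ℕ => C * ‖u‖ ^ 2 * (r⁻¹ ^ 2) ^ k) Filter.atTop
      (nhds 0) := by
    simpa using (tendsto_pow_atTop_nhds_zero_of_lt_one (by positivity)
      (pow_lt_one₀ (by positivity) (inv_lt_one_of_one_lt₀ hr) two_ne_zero)).const_mul
      (C * ‖u‖ ^ 2)
  have hle : ‖(inner ℂ (P u) y : ℂ)‖ ^ 2 ≤ 0 := ge_of_tendsto' hlim hbound
  simpa using hle

end Hilbert

theorem stmt_14 {H : Type*} [NormedAddCommGroup H] [InnerProductSpace ℂ H] [CompleteSpace H]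
    {ι : Type*} (A : H →L[ℂ] H)
    (hA : ContinuousLinearMap.adjoint A ∘L A = A ∘L ContinuousLinearMap.adjoint A)
    (x : ι → H)
    (hBessel : ∃ C > 0, ∀ v : H, ∀ F : Finset (ι × ℕ),
        ∑ p ∈ F, ‖(inner ℂ v ((A ^ p.2) (x p.1)) : ℂ)‖ ^ 2 ≤ C * ‖v‖ ^ 2)
    (hcomplete :
        (Submodule.span ℂ (Set.range fun p : ι × ℕ => (A ^ p.2) (x p.1))).topologicalClosure
          = ⊤) :
    spectrum ℂ A ⊆ Metric.closedBall (0 : ℂ) 1 := by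
  obtain ⟨C, hC, hB⟩ := hBessel
  have : IsStarNormal A := ⟨by rw [commute_iff_eq, star_eq_adjoint]; exact hA⟩
  have horbit : ∀ (p : ι × ℕ) n v,
      ‖(inner ℂ v ((A ^ n) ((A ^ p.2) (x p.1))) : ℂ)‖ ^ 2 ≤ C * ‖v‖ ^ 2 := fun p n v => by
    rw [← mul_apply_eq_comp, ← pow_add]
    simpa only [Finset.sum_singleton] using hB v {(p.1, n + p.2)}
  intro w hw
  by_contra hw1
  rw [mem_closedBall_zero_iff, not_le] at hw1
  obtain ⟨f, hf, hf0, hfw, hf1⟩ :=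
    Complex.exists_continuous_eqOn_closedBall_zero (r := (1 + ‖w‖) / 2) (w := w) (by linarith)
  have hP : cfc f A = 0 := ext fun u =>
    eq_zero_of_forall_inner_eq_zero_of_dense_span hcomplete fun p =>
      inner_eq_zero_of_forall_eq_star_pow_mul hC.le (by linarith) (horbit p)
        (exists_cfc_eq_star_pow_mul hf (by linarith) hf0 hf1) u
  have h1 : (1 : ℂ) ∈ spectrum ℂ (cfc f A) := by
    rw [cfc_map_spectrum f A]
    exact ⟨w, hw, hfw⟩
  rw [hP, spectrum.mem_iff] at h1
  exact h1 (by simp)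
end

section
/- Let μ be a finite positive Borel measure on ℂ with μ({z ∈ ℂ : |z| > 1}) = 0, and suppose that the function z ↦ (1 − |z|²)^{−1} is μ-integrable. Then the sequence of monomials (e_k)_{k∈ℕ} is a Bessel sequence in L²(μ) with Bessel bound ∫ (1 − |z|²)^{−1} dμ(z). -/
/-!
By Cauchy–Schwarz, `|⟨g, e_k⟩|² ≤ ‖g‖² ∫ |z|^{2k} dμ`; summing over `k`, the geometric series
`∑ₖ |z|^{2k} = (1 - |z|²)⁻¹` bounds the sum by `‖g‖² ∫ (1 - |z|²)⁻¹ dμ`. In `ℝ≥0∞` the identity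
`∑ₖ rᵏ = (1 - r)⁻¹` holds for every `r` (both sides are `⊤` when `r ≥ 1`), so the whole estimate
is carried out with lower Lebesgue integrals and converted to real integrals only at the end.
-/

open MeasureTheory

section

variable {α 𝕜 : Type*} [MeasurableSpace α] {μ : Measure α} [RCLike 𝕜]

theorem enorm_integral_mul_sq_le {f g : α → 𝕜} (hf : AEMeasurable f μ) (hg : AEMeasurable g μ) :
    ‖∫ a, f a * g a ∂μ‖ₑ ^ 2 ≤ (∫⁻ a, ‖f a‖ₑ ^ 2 ∂μ) * ∫⁻ a, ‖g a‖ₑ ^ 2 ∂μ := by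
  have holder := ENNReal.lintegral_mul_le_Lp_mul_Lq μ Real.HolderConjugate.two_two
    hf.enorm hg.enorm
  simp only [Pi.mul_apply, ENNReal.rpow_two] at holder
  calc ‖∫ a, f a * g a ∂μ‖ₑ ^ 2 ≤ (∫⁻ a, ‖f a‖ₑ * ‖g a‖ₑ ∂μ) ^ 2 := by
        gcongr
        simpa only [enorm_mul] using enorm_integral_le_lintegral_enorm (fun a => f a * g a)
    _ ≤ ((∫⁻ a, ‖f a‖ₑ ^ 2 ∂μ) ^ (1 / 2 : ℝ) * (∫⁻ a, ‖g a‖ₑ ^ 2 ∂μ) ^ (1 / 2 : ℝ)) ^ 2 := by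
        gcongr
    _ = (∫⁻ a, ‖f a‖ₑ ^ 2 ∂μ) * ∫⁻ a, ‖g a‖ₑ ^ 2 ∂μ := by
        rw [mul_pow, ← ENNReal.rpow_natCast, ← ENNReal.rpow_natCast, ← ENNReal.rpow_mul,
          ← ENNReal.rpow_mul]
        norm_num

theorem sum_enorm_integral_mul_conj_sq_le {ι : Type*} (s : Finset ι) {g : α → 𝕜} {φ : ι → α → 𝕜}
    (hg : AEMeasurable g μ) (hφ : ∀ i, AEMeasurable (φ i) μ) :
    ∑ i ∈ s, ‖∫ a, g a * starRingEnd 𝕜 (φ i a) ∂μ‖ₑ ^ 2 ≤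
      (∫⁻ a, ‖g a‖ₑ ^ 2 ∂μ) * ∫⁻ a, ∑ i ∈ s, ‖φ i a‖ₑ ^ 2 ∂μ := by
  rw [lintegral_finsetSum' s fun i _ => (hφ i).enorm.pow_const 2, Finset.mul_sum]
  refine Finset.sum_le_sum fun i _ => ?_
  simpa only [Function.comp_apply, RCLike.enorm_conj] using
    enorm_integral_mul_sq_le hg (RCLike.continuous_conj.measurable.comp_aemeasurable (hφ i))

theorem sum_enorm_pow_sq_le {K : Type*} [NormedDivisionRing K] (s : Finset ℕ) (z : K) :
    ∑ k ∈ s, ‖z ^ k‖ₑ ^ 2 ≤ (ENNReal.ofReal (1 - ‖z‖ ^ 2))⁻¹ := by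
  calc ∑ k ∈ s, ‖z ^ k‖ₑ ^ 2 = ∑ k ∈ s, (‖z‖ₑ ^ 2) ^ k := by
        simp only [enorm_pow, ← pow_mul, mul_comm]
    _ ≤ ∑' k, (‖z‖ₑ ^ 2) ^ k := ENNReal.sum_le_tsum s
    _ = (ENNReal.ofReal (1 - ‖z‖ ^ 2))⁻¹ := by
        rw [ENNReal.tsum_geometric, ENNReal.ofReal_sub _ (by positivity), ENNReal.ofReal_one,
          ENNReal.ofReal_pow (norm_nonneg z), ofReal_norm]

theorem ofReal_integral_norm_sq_eq_lintegral {E : Type*} [NormedAddCommGroup E] {g : α → E}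
    (hg : MemLp g 2 μ) : ENNReal.ofReal (∫ a, ‖g a‖ ^ 2 ∂μ) = ∫⁻ a, ‖g a‖ₑ ^ 2 ∂μ := by
  rw [ofReal_integral_eq_lintegral_ofReal (hg.integrable_norm_pow two_ne_zero)
    (Filter.Eventually.of_forall fun a => by positivity)]
  simp only [ENNReal.ofReal_pow (norm_nonneg _), ofReal_norm]

end

theorem stmt_15_general (μ : Measure ℂ)
    (hint : ∫⁻ z, (ENNReal.ofReal (1 - ‖z‖ ^ 2))⁻¹ ∂μ < ⊤) :
    MonomialsBesselWith μ
      (∫⁻ z, (ENNReal.ofReal (1 - ‖z‖ ^ 2))⁻¹ ∂μ).toReal := by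
  intro g hg F
  rw [← ENNReal.ofReal_le_ofReal_iff (by positivity), ENNReal.ofReal_mul ENNReal.toReal_nonneg,
    ENNReal.ofReal_toReal hint.ne, ofReal_integral_norm_sq_eq_lintegral hg,
    ENNReal.ofReal_sum_of_nonneg fun k _ => by positivity]
  simp only [ENNReal.ofReal_pow (norm_nonneg _), ofReal_norm]
  calc ∑ k ∈ F, ‖∫ z, g z * starRingEnd ℂ (z ^ k) ∂μ‖ₑ ^ 2
      ≤ (∫⁻ z, ‖g z‖ₑ ^ 2 ∂μ) * ∫⁻ z, ∑ k ∈ F, ‖z ^ k‖ₑ ^ 2 ∂μ :=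
        sum_enorm_integral_mul_conj_sq_le F hg.aestronglyMeasurable.aemeasurable
          fun k => (measurable_id.pow_const k).aemeasurable
    _ ≤ (∫⁻ z, ‖g z‖ₑ ^ 2 ∂μ) * ∫⁻ z, (ENNReal.ofReal (1 - ‖z‖ ^ 2))⁻¹ ∂μ := by
        gcongr with z
        exact sum_enorm_pow_sq_le F z
    _ = _ := mul_comm _ _

theorem stmt_15 (μ : Measure ℂ) [IsFiniteMeasure μ]
    (hμ : μ {z : ℂ | 1 < ‖z‖} = 0)
    (hint : ∫⁻ z, (ENNReal.ofReal (1 - ‖z‖ ^ 2))⁻¹ ∂μ < ⊤) :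
    MonomialsBesselWith μ
      (∫⁻ z, (ENNReal.ofReal (1 - ‖z‖ ^ 2))⁻¹ ∂μ).toReal :=
  stmt_15_general μ hint
end

section
/- Let μ be a finite positive Borel measure on ℂ with μ({z ∈ ℂ : |z| > 1}) = 0. Assume: (a) there exists C > 0 such that μ(Δ) ≤ C·σ(Δ) for every Borel set Δ ⊆ 𝕋; and (b) there exist ε ∈ (0,1) and C' > 0 such that μ(Δ) ≤ C'·λ₂(Δ) for every Borel set Δ contained in the annulus {z ∈ ℂ : 1 − ε < |z| < 1}, where λ₂ is two-dimensional Lebesgue measure on ℂ ≅ ℝ². Then the sequence of monomials (e_k)_{k∈ℕ} is a Bessel sequence in L²(μ). -/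
/-!
By Cauchy–Schwarz against the polynomial `∑ ⟨g, e_k⟩ z^k`, the Bessel bound follows from the
synthesis bound `∫ |∑ c_k z^k|² dμ ≤ K ∑ |c_k|²`, which is stable under sums, scalings and
domination of measures. Since `μ` lives on the closed unit disc,
`μ ≤ C σ + C' λ₂|_{|z| < 1} + μ|_{|z| ≤ 1 - ε}`. The synthesis bound holds for `σ` with `K = 1`
(Parseval), for `λ₂` on the unit disc with `K = 2π` (polar coordinates and Parseval on each
circle), and for any finite measure on `|z| ≤ ρ < 1`, where `|p(z)|² ≤ (1 - ρ²)⁻¹ ∑ |c_k|²`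
pointwise.
-/

open MeasureTheory

/-- The normalized arc length measure on the unit circle `𝕋 ⊆ ℂ`, i.e. the pushforward of
Lebesgue measure on `[0,1)` under `t ↦ exp(2πit)`; it is a probability measure on `𝕋`. -/
noncomputable def arcMeasure : Measure ℂ :=
  Measure.map (fun t : ℝ => Complex.exp (2 * Real.pi * Complex.I * t))
    (volume.restrict (Set.Ico (0 : ℝ) 1))

open Complex Set Metric
open scoped Real ENNReal ComplexConjugate

lemma integral_norm_sq_sum_of_orthogonal {X : Type*} [MeasurableSpace X] {ν : Measure X}
    {φ : ℕ → X → ℂ} {v : ℕ → ℝ}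
    (hint : ∀ j k, Integrable (fun x => φ j x * conj (φ k x)) ν)
    (horth : ∀ j k, ∫ x, φ j x * conj (φ k x) ∂ν = if j = k then (v j : ℂ) else 0)
    (c : ℕ → ℂ) (F : Finset ℕ) :
    ∫ x, ‖∑ k ∈ F, c k * φ k x‖ ^ 2 ∂ν = ∑ k ∈ F, ‖c k‖ ^ 2 * v k := by
  have expand : ∀ x, ((‖∑ k ∈ F, c k * φ k x‖ ^ 2 : ℝ) : ℂ)
      = ∑ j ∈ F, ∑ k ∈ F, c j * conj (c k) * (φ j x * conj (φ k x)) := by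
    intro x
    push_cast
    rw [← mul_conj', map_sum, Finset.sum_mul_sum]
    refine Finset.sum_congr rfl fun j _ => Finset.sum_congr rfl fun k _ => ?_
    simp only [map_mul]
    ring
  have hcoef : ∀ j k, Integrable (fun x => c j * conj (c k) * (φ j x * conj (φ k x))) ν :=
    fun j k => (hint j k).const_mul _
  apply Complex.ofReal_injective
  rw [← integral_complex_ofReal]
  simp_rw [expand]
  rw [integral_finsetSum _ fun j _ => integrable_finsetSum _ fun k _ => hcoef j k]
  simp_rw [integral_finsetSum _ fun k _ => hcoef _ k, integral_const_mul, horth, mul_ite,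
    mul_zero, Finset.sum_ite_eq]
  push_cast
  exact Finset.sum_congr rfl fun k hk => by rw [if_pos hk, mul_conj']

lemma integral_exp_int_mul_mul_I (n : ℤ) (a : ℝ) :
    ∫ θ in a..a + 2 * π, exp (n * θ * I) = if n = 0 then (2 * π : ℂ) else 0 := by
  split_ifs with hn
  · simp [hn]
  · have hc : (n * I : ℂ) ≠ 0 := mul_ne_zero (by exact_mod_cast hn) I_ne_zero
    simp_rw [mul_right_comm _ _ I]
    rw [integral_exp_mul_complex hc, div_eq_zero_iff, sub_eq_zero]
    left
    rw [show (n * I * ((a + 2 * π : ℝ) : ℂ)) = n * I * a + n * (2 * π * I) by push_cast; ring,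
      exp_add, exp_int_mul_two_pi_mul_I, mul_one]

lemma integral_norm_sq_sum_monomial_circle (c : ℕ → ℂ) (F : Finset ℕ) (r a : ℝ) :
    ∫ θ in a..a + 2 * π, ‖∑ k ∈ F, c k * (r * exp (θ * I)) ^ k‖ ^ 2
      = ∑ k ∈ F, ‖c k‖ ^ 2 * (2 * π * r ^ (2 * k)) := by
  have hprod : ∀ j k : ℕ, ∀ θ : ℝ, (r * exp (θ * I) : ℂ) ^ j * conj ((r * exp (θ * I)) ^ k)
      = (r : ℂ) ^ (j + k) * exp (((j - k : ℤ) : ℂ) * θ * I) := by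
    intro j k θ
    rw [map_pow, map_mul, conj_ofReal, ← exp_conj, map_mul, conj_ofReal, conj_I, mul_pow,
      mul_pow, ← exp_nat_mul, ← exp_nat_mul, mul_mul_mul_comm, ← exp_add, pow_add]
    push_cast
    ring_nf
  rw [intervalIntegral.integral_of_le (by linarith [Real.pi_pos])]
  refine integral_norm_sq_sum_of_orthogonal (fun j k => ?_) (fun j k => ?_) c F
  · exact (Continuous.integrableOn_Icc (by fun_prop)).mono_set Ioc_subset_Icc_self
  · rw [← intervalIntegral.integral_of_le (by linarith [Real.pi_pos])]
    simp_rw [hprod, intervalIntegral.integral_const_mul, integral_exp_int_mul_mul_I,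
      sub_eq_zero, Nat.cast_inj]
    split_ifs with h
    · subst h; push_cast; ring_nf
    · simp

lemma lintegral_enorm_sq_eq_ofReal_integral {X : Type*} [MeasurableSpace X] {ν : Measure X}
    {f : X → ℂ} (hf : Integrable (fun x => ‖f x‖ ^ 2) ν) :
    ∫⁻ x, ‖f x‖ₑ ^ 2 ∂ν = ENNReal.ofReal (∫ x, ‖f x‖ ^ 2 ∂ν) := by
  rw [ofReal_integral_eq_lintegral_ofReal hf (ae_of_all _ fun x => by positivity)]
  simp_rw [ENNReal.ofReal_pow (norm_nonneg _), ofReal_norm]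

lemma ofReal_sum_norm_sq (c : ℕ → ℂ) (F : Finset ℕ) :
    ENNReal.ofReal (∑ k ∈ F, ‖c k‖ ^ 2) = ∑ k ∈ F, ‖c k‖ₑ ^ 2 := by
  rw [ENNReal.ofReal_sum_of_nonneg fun k _ => by positivity]
  simp_rw [ENNReal.ofReal_pow (norm_nonneg _), ofReal_norm]

lemma lintegral_enorm_sq_sum_monomial_arcMeasure (c : ℕ → ℂ) (F : Finset ℕ) :
    ∫⁻ z, ‖∑ k ∈ F, c k * z ^ k‖ₑ ^ 2 ∂arcMeasure = ∑ k ∈ F, ‖c k‖ₑ ^ 2 := by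
  have hw : Continuous fun t : ℝ => exp (2 * π * I * t) := by fun_prop
  rw [arcMeasure, lintegral_map (by fun_prop) hw.measurable,
    lintegral_enorm_sq_eq_ofReal_integral
      ((Continuous.integrableOn_Icc (by fun_prop)).mono_set Ico_subset_Icc_self),
    ← ofReal_sum_norm_sq]
  congr 1
  have hsub := intervalIntegral.integral_comp_mul_left
    (fun θ : ℝ => ‖∑ k ∈ F, c k * ((1 : ℝ) * exp (θ * I)) ^ k‖ ^ 2)
    (mul_ne_zero two_ne_zero Real.pi_ne_zero) (a := 0) (b := 1)
  rw [mul_zero, mul_one, ← zero_add (2 * π), integral_norm_sq_sum_monomial_circle] at hsub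
  rw [integral_Ico_eq_integral_Ioo, ← integral_Ioc_eq_integral_Ioo,
    ← intervalIntegral.integral_of_le zero_le_one]
  have harg : ∀ t : ℝ, (2 * π * I * t : ℂ) = ((2 * π * t : ℝ) : ℂ) * I := fun t => by
    push_cast; ring
  simp only [harg, zero_add, ofReal_one, one_mul, one_pow, mul_one] at hsub ⊢
  rw [hsub, ← Finset.sum_mul, smul_eq_mul, mul_comm, mul_inv_cancel_right₀ Real.two_pi_pos.ne']

lemma lintegral_enorm_sq_sum_monomial_circle_le {r : ℝ} (hr0 : 0 ≤ r) (hr1 : r ≤ 1)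
    (c : ℕ → ℂ) (F : Finset ℕ) :
    ∫⁻ θ in Ioo (-π) π, ‖∑ k ∈ F, c k * (r * exp (θ * I)) ^ k‖ₑ ^ 2
      ≤ ENNReal.ofReal (2 * π) * ∑ k ∈ F, ‖c k‖ₑ ^ 2 := by
  rw [lintegral_enorm_sq_eq_ofReal_integral
      ((Continuous.integrableOn_Icc (by fun_prop)).mono_set Ioo_subset_Icc_self),
    ← integral_Ioc_eq_integral_Ioo, ← intervalIntegral.integral_of_le (by linarith [Real.pi_pos])]
  have hparseval := integral_norm_sq_sum_monomial_circle c F r (-π)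
  rw [show -π + 2 * π = π by ring] at hparseval
  rw [hparseval, ← ofReal_sum_norm_sq,
    ← ENNReal.ofReal_mul Real.two_pi_pos.le, Finset.mul_sum]
  refine ENNReal.ofReal_le_ofReal (Finset.sum_le_sum fun k _ => ?_)
  calc ‖c k‖ ^ 2 * (2 * π * r ^ (2 * k)) = 2 * π * ‖c k‖ ^ 2 * r ^ (2 * k) := by ring
    _ ≤ 2 * π * ‖c k‖ ^ 2 := mul_le_of_le_one_right (by positivity) (pow_le_one₀ hr0 hr1)

lemma Complex.polarCoord_symm_eq_mul_exp (p : ℝ × ℝ) :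
    Complex.polarCoord.symm p = p.1 * exp (p.2 * I) := by
  rw [Complex.polarCoord_symm_apply, exp_mul_I, ← ofReal_cos, ← ofReal_sin]

lemma norm_sq_sum_monomial_le {ρ : ℝ} (hρ : ρ < 1) {z : ℂ} (hz : ‖z‖ ≤ ρ)
    (c : ℕ → ℂ) (F : Finset ℕ) :
    ‖∑ k ∈ F, c k * z ^ k‖ ^ 2 ≤ (1 - ρ ^ 2)⁻¹ * ∑ k ∈ F, ‖c k‖ ^ 2 := by
  have hρ0 : 0 ≤ ρ := (norm_nonneg z).trans hz
  have hρ2 : ρ ^ 2 < 1 := by nlinarith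
  have htriangle : ‖∑ k ∈ F, c k * z ^ k‖ ≤ ∑ k ∈ F, ‖c k‖ * ρ ^ k := by
    refine (norm_sum_le _ _).trans (Finset.sum_le_sum fun k _ => ?_)
    rw [norm_mul, norm_pow]
    gcongr
  have hgeom : ∑ k ∈ F, (ρ ^ k) ^ 2 ≤ (1 - ρ ^ 2)⁻¹ := by
    simp_rw [← pow_mul, mul_comm _ 2, pow_mul]
    rw [← tsum_geometric_of_lt_one (by positivity) hρ2]
    exact Summable.sum_le_tsum F (fun k _ => by positivity)
      (summable_geometric_of_lt_one (by positivity) hρ2)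
  calc ‖∑ k ∈ F, c k * z ^ k‖ ^ 2 ≤ (∑ k ∈ F, ‖c k‖ * ρ ^ k) ^ 2 := by gcongr
    _ ≤ (∑ k ∈ F, ‖c k‖ ^ 2) * ∑ k ∈ F, (ρ ^ k) ^ 2 := Finset.sum_mul_sq_le_sq_mul_sq F _ _
    _ ≤ (∑ k ∈ F, ‖c k‖ ^ 2) * (1 - ρ ^ 2)⁻¹ := by gcongr
    _ = (1 - ρ ^ 2)⁻¹ * ∑ k ∈ F, ‖c k‖ ^ 2 := mul_comm _ _

lemma norm_integral_mul_conj_le {α : Type*} [MeasurableSpace α] {μ : Measure α} {f g : α → ℂ}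
    (hf : MemLp f 2 μ) (hg : MemLp g 2 μ) :
    ‖∫ x, f x * conj (g x) ∂μ‖ ≤ √(∫ x, ‖f x‖ ^ 2 ∂μ) * √(∫ x, ‖g x‖ ^ 2 ∂μ) := by
  have holder := integral_mul_norm_le_Lp_mul_Lq Real.HolderConjugate.two_two
    (by rwa [ENNReal.ofReal_ofNat] : MemLp f (.ofReal 2) μ)
    (by rwa [ENNReal.ofReal_ofNat] : MemLp g (.ofReal 2) μ)
  simp only [Real.rpow_two] at holder
  rw [Real.sqrt_eq_rpow, Real.sqrt_eq_rpow]
  calc ‖∫ x, f x * conj (g x) ∂μ‖ ≤ ∫ x, ‖f x‖ * ‖g x‖ ∂μ := by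
        simpa only [norm_mul, RCLike.norm_conj] using
          norm_integral_le_integral_norm (fun x => f x * conj (g x))
    _ ≤ _ := holder

lemma MeasureTheory.Measure.restrict_le_smul_of_forall_le {α : Type*} [MeasurableSpace α]
    {μ ν : Measure α} {s : Set α} {a : ℝ≥0∞} (hs : MeasurableSet s)
    (h : ∀ t, MeasurableSet t → t ⊆ s → μ t ≤ a * ν t) : μ.restrict s ≤ a • ν :=
  Measure.le_iff.2 fun t ht => by
    rw [Measure.restrict_apply ht, Measure.smul_apply, smul_eq_mul]
    exact (h _ (ht.inter hs) inter_subset_right).trans (by gcongr; exact inter_subset_left)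

lemma mul_sum_enorm_sq_ne_top {K : ℝ≥0∞} (hK : K ≠ ∞) (c : ℕ → ℂ) (F : Finset ℕ) :
    K * ∑ k ∈ F, ‖c k‖ₑ ^ 2 ≠ ∞ :=
  ENNReal.mul_ne_top hK (ENNReal.sum_ne_top.2 fun _ _ => ENNReal.pow_ne_top enorm_ne_top)

def MonomialsSynthesisBoundWith (ν : Measure ℂ) (K : ℝ≥0∞) : Prop :=
  ∀ (c : ℕ → ℂ) (F : Finset ℕ),
    ∫⁻ z, ‖∑ k ∈ F, c k * z ^ k‖ₑ ^ 2 ∂ν ≤ K * ∑ k ∈ F, ‖c k‖ₑ ^ 2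

namespace MonomialsSynthesisBoundWith

variable {μ ν : Measure ℂ} {K L : ℝ≥0∞}

lemma mono_measure (h : MonomialsSynthesisBoundWith ν K) (hμν : μ ≤ ν) :
    MonomialsSynthesisBoundWith μ K :=
  fun c F => (lintegral_mono' hμν le_rfl).trans (h c F)

lemma add_measure (hμ : MonomialsSynthesisBoundWith μ K) (hν : MonomialsSynthesisBoundWith ν L) :
    MonomialsSynthesisBoundWith (μ + ν) (K + L) := fun c F => by
  rw [lintegral_add_measure, add_mul]
  exact add_le_add (hμ c F) (hν c F)

lemma smul_measure (h : MonomialsSynthesisBoundWith ν K) (a : ℝ≥0∞) :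
    MonomialsSynthesisBoundWith (a • ν) (a * K) := fun c F => by
  rw [lintegral_smul_measure, smul_eq_mul, mul_assoc]
  gcongr
  exact h c F

lemma memLp_two (h : MonomialsSynthesisBoundWith μ K) (hK : K ≠ ∞) (c : ℕ → ℂ) (F : Finset ℕ) :
    MemLp (fun z => ∑ k ∈ F, c k * z ^ k) 2 μ := by
  refine (memLp_two_iff_integrable_sq_norm (by fun_prop)).2 ⟨by fun_prop, ?_⟩
  rw [hasFiniteIntegral_iff_enorm]
  simp_rw [enorm_pow, enorm_norm]
  exact (h c F).trans_lt (mul_sum_enorm_sq_ne_top hK c F).lt_top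

lemma integral_norm_sq_le (h : MonomialsSynthesisBoundWith μ K) (hK : K ≠ ∞)
    (c : ℕ → ℂ) (F : Finset ℕ) :
    ∫ z, ‖∑ k ∈ F, c k * z ^ k‖ ^ 2 ∂μ ≤ K.toReal * ∑ k ∈ F, ‖c k‖ ^ 2 := by
  have hint := (h.memLp_two hK c F).integrable_norm_pow two_ne_zero
  rw [← ENNReal.toReal_ofReal (integral_nonneg fun z => by positivity),
    ← lintegral_enorm_sq_eq_ofReal_integral hint,
    ← ENNReal.toReal_ofReal (show 0 ≤ ∑ k ∈ F, ‖c k‖ ^ 2 by positivity), ← ENNReal.toReal_mul,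
    ofReal_sum_norm_sq]
  exact ENNReal.toReal_mono (mul_sum_enorm_sq_ne_top hK c F) (h c F)

theorem monomialsBesselWith (h : MonomialsSynthesisBoundWith μ K) (hK : K ≠ ∞) :
    MonomialsBesselWith μ K.toReal := by
  intro g hg F
  set a : ℕ → ℂ := fun k => ∫ z, g z * conj (z ^ k) ∂μ
  set p : ℂ → ℂ := fun z => ∑ k ∈ F, a k * z ^ k
  set S := ∑ k ∈ F, ‖a k‖ ^ 2
  have hmonomial : ∀ k, MemLp (fun z : ℂ => z ^ k) 2 μ := fun k => by
    simpa using h.memLp_two hK (fun _ => 1) {k}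
  have hpair : ∫ z, g z * conj (p z) ∂μ = S := by
    have hint : ∀ k ∈ F, Integrable (fun z => conj (a k) * (g z * conj (z ^ k))) μ :=
      fun k _ => (hg.integrable_mul (hmonomial k).star).const_mul _
    simp_rw [p, map_sum, Finset.mul_sum, map_mul, mul_left_comm (g _)]
    rw [integral_finsetSum _ hint]
    simp only [S, integral_const_mul]
    push_cast
    refine Finset.sum_congr rfl fun k _ => ?_
    rw [← mul_conj']
    exact mul_comm _ _
  have hS : S ≤ √(∫ z, ‖g z‖ ^ 2 ∂μ) * √(∫ z, ‖p z‖ ^ 2 ∂μ) := by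
    have := norm_integral_mul_conj_le hg (h.memLp_two hK a F)
    rwa [hpair, Complex.norm_real, Real.norm_of_nonneg (by positivity)] at this
  have hsq : S ^ 2 ≤ (∫ z, ‖g z‖ ^ 2 ∂μ) * (K.toReal * S) := calc
    S ^ 2 ≤ (√(∫ z, ‖g z‖ ^ 2 ∂μ) * √(∫ z, ‖p z‖ ^ 2 ∂μ)) ^ 2 := by gcongr
    _ = (∫ z, ‖g z‖ ^ 2 ∂μ) * ∫ z, ‖p z‖ ^ 2 ∂μ := by
      rw [mul_pow, Real.sq_sqrt (by positivity), Real.sq_sqrt (by positivity)]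
    _ ≤ (∫ z, ‖g z‖ ^ 2 ∂μ) * (K.toReal * S) := by
      gcongr
      exact h.integral_norm_sq_le hK a F
  have hu : 0 ≤ ∫ z, ‖g z‖ ^ 2 ∂μ := by positivity
  rcases (show 0 ≤ S by positivity).eq_or_lt with hS0 | hS0
  · rw [← hS0]; positivity
  · nlinarith

end MonomialsSynthesisBoundWith

lemma monomialsSynthesisBoundWith_arcMeasure : MonomialsSynthesisBoundWith arcMeasure 1 :=
  fun c F => by rw [lintegral_enorm_sq_sum_monomial_arcMeasure, one_mul]

lemma monomialsSynthesisBoundWith_volume_ball :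
    MonomialsSynthesisBoundWith (volume.restrict (ball 0 1)) (ENNReal.ofReal (2 * π)) := by
  intro c F
  set f : ℂ → ℝ≥0∞ := fun z => ‖∑ k ∈ F, c k * z ^ k‖ₑ ^ 2
  set S : Set (ℝ × ℝ) := Ioo (0 : ℝ) 1 ×ˢ Ioo (-π) π
  have hS : MeasurableSet S := measurableSet_Ioo.prod measurableSet_Ioo
  have hpolar : ∀ p ∈ polarCoord.target, ENNReal.ofReal p.1 • (ball 0 1).indicator f
      (Complex.polarCoord.symm p) ≤ S.indicator (fun p => f (Complex.polarCoord.symm p)) p := by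
    rintro ⟨r, θ⟩ ⟨hr, hθ⟩
    by_cases hr1 : r < 1
    · rw [indicator_of_mem (show (r, θ) ∈ S from ⟨⟨hr, hr1⟩, hθ⟩), smul_eq_mul]
      exact mul_le_of_le_one_of_le (ENNReal.ofReal_le_one.2 hr1.le) (indicator_le_self _ _ _)
    · have : Complex.polarCoord.symm (r, θ) ∉ ball 0 1 := by
        simpa [abs_of_pos (show 0 < r from hr)] using hr1
      rw [indicator_of_notMem this, smul_zero]
      exact zero_le
  calc ∫⁻ z in ball (0 : ℂ) 1, f z
      = ∫⁻ p in polarCoord.target,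
          ENNReal.ofReal p.1 • (ball 0 1).indicator f (Complex.polarCoord.symm p) := by
        rw [Complex.lintegral_comp_polarCoord_symm, lintegral_indicator measurableSet_ball]
    _ ≤ ∫⁻ p in polarCoord.target, S.indicator (fun p => f (Complex.polarCoord.symm p)) p :=
        setLIntegral_mono' polarCoord.open_target.measurableSet hpolar
    _ ≤ ∫⁻ p in S, f (Complex.polarCoord.symm p) := by
        rw [← lintegral_indicator hS]
        exact setLIntegral_le_lintegral _ _
    _ = ∫⁻ r in Ioo (0 : ℝ) 1, ∫⁻ θ in Ioo (-π) π, f (r * exp (θ * I)) := by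
        have hf : Measurable f := by fun_prop
        simp_rw [Complex.polarCoord_symm_eq_mul_exp]
        rw [Measure.volume_eq_prod, setLIntegral_prod _ (by fun_prop)]
    _ ≤ ∫⁻ r in Ioo (0 : ℝ) 1, ENNReal.ofReal (2 * π) * ∑ k ∈ F, ‖c k‖ₑ ^ 2 :=
        setLIntegral_mono measurable_const fun r hr =>
          lintegral_enorm_sq_sum_monomial_circle_le hr.1.le hr.2.le c F
    _ = ENNReal.ofReal (2 * π) * ∑ k ∈ F, ‖c k‖ₑ ^ 2 := by simp

lemma monomialsSynthesisBoundWith_restrict_closedBall (ν : Measure ℂ) {ρ : ℝ} (hρ : ρ < 1) :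
    MonomialsSynthesisBoundWith (ν.restrict (closedBall 0 ρ))
      (ν univ * ENNReal.ofReal (1 - ρ ^ 2)⁻¹) := fun c F => by
  have hpointwise : ∀ z ∈ closedBall (0 : ℂ) ρ,
      ‖∑ k ∈ F, c k * z ^ k‖ₑ ^ 2 ≤ ENNReal.ofReal (1 - ρ ^ 2)⁻¹ * ∑ k ∈ F, ‖c k‖ₑ ^ 2 := by
    intro z hz
    rw [mem_closedBall, dist_zero_right] at hz
    rw [← ofReal_sum_norm_sq, ← ENNReal.ofReal_mul (inv_nonneg.2 (by nlinarith [norm_nonneg z])),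
      ← ofReal_norm, ← ENNReal.ofReal_pow (norm_nonneg _)]
    exact ENNReal.ofReal_le_ofReal (norm_sq_sum_monomial_le hρ hz c F)
  calc ∫⁻ z in closedBall 0 ρ, ‖∑ k ∈ F, c k * z ^ k‖ₑ ^ 2 ∂ν
      ≤ ∫⁻ _ in closedBall 0 ρ, ENNReal.ofReal (1 - ρ ^ 2)⁻¹ * ∑ k ∈ F, ‖c k‖ₑ ^ 2 ∂ν :=
        setLIntegral_mono measurable_const hpointwise
    _ = ENNReal.ofReal (1 - ρ ^ 2)⁻¹ * (∑ k ∈ F, ‖c k‖ₑ ^ 2) * ν (closedBall 0 ρ) :=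
        setLIntegral_const _ _
    _ ≤ ENNReal.ofReal (1 - ρ ^ 2)⁻¹ * (∑ k ∈ F, ‖c k‖ₑ ^ 2) * ν univ := by
        gcongr; exact subset_univ _
    _ = ν univ * ENNReal.ofReal (1 - ρ ^ 2)⁻¹ * ∑ k ∈ F, ‖c k‖ₑ ^ 2 := by ring

lemma monomialsSynthesisBoundWith_of_dominated {μ : Measure ℂ} (hμ : μ {z : ℂ | 1 < ‖z‖} = 0)
    {C : ℝ} (hC : ∀ Δ : Set ℂ, MeasurableSet Δ → Δ ⊆ {z : ℂ | ‖z‖ = 1} →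
        μ Δ ≤ ENNReal.ofReal C * arcMeasure Δ)
    {ε : ℝ} (hε : 0 < ε) {C' : ℝ} (hC' : ∀ Δ : Set ℂ, MeasurableSet Δ →
        Δ ⊆ {z : ℂ | 1 - ε < ‖z‖ ∧ ‖z‖ < 1} →
        μ Δ ≤ ENNReal.ofReal C' * (volume : Measure ℂ) Δ) :
    MonomialsSynthesisBoundWith μ (ENNReal.ofReal C + ENNReal.ofReal C' * ENNReal.ofReal (2 * π)
      + μ univ * ENNReal.ofReal (1 - (1 - ε) ^ 2)⁻¹) := by
  set circle : Set ℂ := {z | ‖z‖ = 1}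
  set annulus : Set ℂ := {z | 1 - ε < ‖z‖ ∧ ‖z‖ < 1}
  have hcircle : MeasurableSet circle := measurableSet_eq_fun measurable_norm measurable_const
  have hannulus : MeasurableSet annulus :=
    (measurableSet_lt measurable_const measurable_norm).inter
      (measurableSet_lt measurable_norm measurable_const)
  have hcover : univ = (({z : ℂ | 1 < ‖z‖} ∪ circle) ∪ annulus) ∪ closedBall 0 (1 - ε) := by
    ext z
    simp only [circle, annulus, mem_univ, mem_union, mem_ofPred_eq, mem_closedBall,
      dist_zero_right, true_iff]
    grind
  have hsplit : μ ≤ μ.restrict circle + μ.restrict annulus + μ.restrict (closedBall 0 (1 - ε)) := by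
    calc μ = μ.restrict ((({z : ℂ | 1 < ‖z‖} ∪ circle) ∪ annulus) ∪ closedBall 0 (1 - ε)) := by
          rw [← hcover, Measure.restrict_univ]
      _ ≤ μ.restrict {z : ℂ | 1 < ‖z‖} + μ.restrict circle + μ.restrict annulus
          + μ.restrict (closedBall 0 (1 - ε)) := by
          refine (Measure.restrict_union_le _ _).trans (add_le_add ?_ le_rfl)
          refine (Measure.restrict_union_le _ _).trans (add_le_add ?_ le_rfl)
          exact Measure.restrict_union_le _ _
      _ = _ := by rw [Measure.restrict_eq_zero.2 hμ, zero_add]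
  have hcircle_le : μ.restrict circle ≤ ENNReal.ofReal C • arcMeasure :=
    Measure.restrict_le_smul_of_forall_le hcircle hC
  have hannulus_le : μ.restrict annulus ≤ ENNReal.ofReal C' • volume.restrict (ball 0 1) := by
    refine Measure.restrict_le_smul_of_forall_le hannulus fun t ht hts => ?_
    rw [Measure.restrict_apply ht, inter_eq_left.2 fun z hz => ?_]
    · exact hC' t ht hts
    · simpa using (hts hz).2
  have hcircle_bound :=
    (monomialsSynthesisBoundWith_arcMeasure.smul_measure _).mono_measure hcircle_le
  rw [mul_one] at hcircle_bound
  exact ((hcircle_bound.add_measure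
    ((monomialsSynthesisBoundWith_volume_ball.smul_measure _).mono_measure hannulus_le)).add_measure
    (monomialsSynthesisBoundWith_restrict_closedBall μ (by linarith))).mono_measure hsplit

theorem stmt_17 (μ : Measure ℂ) [IsFiniteMeasure μ]
    (hμ : μ {z : ℂ | 1 < ‖z‖} = 0)
    (ha : ∃ C > 0, ∀ Δ : Set ℂ, MeasurableSet Δ → Δ ⊆ {z : ℂ | ‖z‖ = 1} →
        μ Δ ≤ ENNReal.ofReal C * arcMeasure Δ)
    (hb : ∃ ε ∈ Set.Ioo (0 : ℝ) 1, ∃ C' > 0, ∀ Δ : Set ℂ, MeasurableSet Δ →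
        Δ ⊆ {z : ℂ | 1 - ε < ‖z‖ ∧ ‖z‖ < 1} →
        μ Δ ≤ ENNReal.ofReal C' * (volume : Measure ℂ) Δ) :
    ∃ C > 0, MonomialsBesselWith μ C := by
  obtain ⟨C, hC, hCΔ⟩ := ha
  obtain ⟨ε, ⟨hε, -⟩, C', -, hC'Δ⟩ := hb
  have hsynth := monomialsSynthesisBoundWith_of_dominated hμ hCΔ hε hC'Δ
  refine ⟨_, ENNReal.toReal_pos ?_ ?_, hsynth.monomialsBesselWith (by finiteness)⟩
  · simp [not_le.2 hC]
  · finiteness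
end
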